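/- arXiv:2601.16889 — 7 statements merged into one kernel-verified Lean document; each statement's English description precedes it below -/
import Mathlib

section
/- Let S = (β^1,...,β^l) be a standard l-symbol satisfying condition (♥): for all 1 ≤ i < j < k ≤ l, ψ_{k,i} = ψ_{j,i} ∘ ψ_{k,j}. If an integer x appears in rows i₁ and i₂ with i₁ < i₂ (i.e., x ∈ β^{i₁} and x ∈ β^{i₂}), then x ∈ β^i for every i with i₁ < i < i₂. -/
/-- `β` is a β-number sequence of charge `s`: strictly increasing for indices `≤ s`,
and equal to the identity for sufficiently small indices. -/
def RowOK (s : ℤ) (β : ℤ → ℤ) : Prop :=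
  (∀ j : ℤ, j ≤ s → β (j - 1) < β j) ∧ ∃ N : ℤ, ∀ j : ℤ, j ≤ N → β j = j

/-- The size of a row of charge `s`: `∑_{j ≤ s} (β_j - j)`. -/
noncomputable def rowSize (s : ℤ) (β : ℤ → ℤ) : ℕ :=
  ∑' k : ℕ, (β (s - k) - (s - k)).toNat

/-- The size of an `l`-symbol (rows indexed by `1,…,l`, row `i` of charge `v i`). -/
noncomputable def symSize (l : ℕ) (v : ℕ → ℤ) (β : ℕ → ℤ → ℤ) : ℕ :=
  ∑ i ∈ Finset.Icc 1 l, rowSize (v i) (β i)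

/-- A symbol is standard if `β^i_j ≤ β^{i+1}_j` for all relevant `i`, `j`. -/
def Standard (l : ℕ) (v : ℕ → ℤ) (β : ℕ → ℤ → ℤ) : Prop :=
  ∀ i : ℕ, 1 ≤ i → i < l → ∀ j : ℤ, j ≤ v (i + 1) → β i j ≤ β (i + 1) j

/-- The set of entries of row `i` of a symbol. -/
def Row (v : ℕ → ℤ) (β : ℕ → ℤ → ℤ) (i : ℕ) : Set ℤ := {x | ∃ j ≤ v i, β i j = x}

/-- `Ψ : B2 → B1` is the Leclerc–Miyachi greedy injection: each entry `y` of `B2`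
(scanned in increasing order) is matched to the largest entry of `B1` not exceeding `y`
which has not been used for a smaller entry of `B2`. -/
def IsLMset (B1 B2 : Set ℤ) (Ψ : ℤ → ℤ) : Prop :=
  ∀ y ∈ B2, IsGreatest {z | z ∈ B1 ∧ z ≤ y ∧ ∀ y' ∈ B2, y' < y → Ψ y' ≠ z} (Ψ y)


lemma lm_mem_le {B1 B2 : Set ℤ} {Ψ : ℤ → ℤ} (h : IsLMset B1 B2 Ψ) {y : ℤ}
    (hy : y ∈ B2) : Ψ y ∈ B1 ∧ Ψ y ≤ y := ⟨(h y hy).1.1, (h y hy).1.2.1⟩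

lemma lm_fix {B1 B2 : Set ℤ} {Ψ : ℤ → ℤ} (h : IsLMset B1 B2 Ψ) {x : ℤ}
    (h1 : x ∈ B1) (h2 : x ∈ B2) : Ψ x = x := by
  have hg := h x h2
  have hxin : x ∈ {z | z ∈ B1 ∧ z ≤ x ∧ ∀ y' ∈ B2, y' < x → Ψ y' ≠ z} := by
    refine ⟨h1, le_refl x, ?_⟩
    intro y' hy' hlt heq
    have := (lm_mem_le h hy').2
    omega
  have h1 := hg.2 hxin
  have h2 := hg.1.2.1
  omega

/-- In a standard symbol satisfying condition (♥), if `x` appears in rows `i₁ < i₂`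
then `x` appears in every intermediate row. -/
theorem spines_interval
    (l : ℕ) (v : ℕ → ℤ) (hv : ∀ i, 1 ≤ i → i < l → v (i + 1) ≤ v i)
    (β : ℕ → ℤ → ℤ) (hrows : ∀ i, 1 ≤ i → i ≤ l → RowOK (v i) (β i))
    (hstd : Standard l v β)
    (ψ : ℕ → ℕ → ℤ → ℤ)
    (hψ : ∀ i j, 1 ≤ i → i < j → j ≤ l → IsLMset (Row v β i) (Row v β j) (ψ j i))
    (heart : ∀ i j k, 1 ≤ i → i < j → j < k → k ≤ l →
      ∀ x ∈ Row v β k, ψ k i x = ψ j i (ψ k j x))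
    (x : ℤ) (i₁ i₂ : ℕ) (h₁ : 1 ≤ i₁) (h₁₂ : i₁ < i₂) (h₂ : i₂ ≤ l)
    (hx₁ : x ∈ Row v β i₁) (hx₂ : x ∈ Row v β i₂) :
    ∀ i, i₁ < i → i < i₂ → x ∈ Row v β i := by
  intro i hi1 hi2
  have h1i : 1 ≤ i := le_trans h₁ (le_of_lt hi1)
  have hil : i ≤ l := le_trans (le_of_lt hi2) h₂
  have h21 := hψ i₁ i₂ h₁ h₁₂ h₂
  have hfix : ψ i₂ i₁ x = x := lm_fix h21 hx₁ hx₂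
  have hheart := heart i₁ i i₂ h₁ hi1 hi2 h₂ x hx₂
  have hz := lm_mem_le (hψ i i₂ h1i hi2 h₂) hx₂
  have hz2 := lm_mem_le (hψ i₁ i h₁ hi1 hil) hz.1
  have : ψ i₂ i x = x := by omega
  rw [this] at hz
  exact hz.1
end

section
/- Let S be a standard l-symbol of nonzero size with multicharge v (v_1 ≥ ... ≥ v_l). Then there exists an entry x = β^k_i of S, taken among the entries {β^l_j : j ≤ v_l} ∪ {β^{l-1}_j : v_l < j ≤ v_{l-1}} ∪ ... ∪ {β^1_j : v_2 < j ≤ v_1}, such that x − 1 ≠ β^s_j for all s ≥ k and all j < i. -/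
lemma rowOK_ge {s : ℤ} {β : ℤ → ℤ} (h : RowOK s β) : ∀ j : ℤ, j ≤ s → j ≤ β j := by
  obtain ⟨hmono, N, hN⟩ := h
  have key : ∀ j : ℤ, N ≤ j → j ≤ s → j ≤ β j := by
    refine Int.le_induction (fun _ => by rw [hN N le_rfl]) ?_
    intro n hn ih hns
    have h1 : β n < β (n + 1) := by
      have := hmono (n + 1) hns
      simpa using this
    have h2 : n ≤ β n := ih (by omega)
    omega
  intro j hj
  rcases le_total N j with h1 | h1
  · exact key j h1 hj
  · rw [hN j h1]

lemma rowSize_eq_zero_iff {s : ℤ} {β : ℤ → ℤ} (h : RowOK s β)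
    (hz : rowSize s β = 0) : ∀ j : ℤ, j ≤ s → β j = j := by
  obtain ⟨hmono, N, hN⟩ := h
  set f : ℕ → ℕ := fun n => (β (s - n) - (s - n)).toNat with hf
  have hout : ∀ n ∉ Finset.range ((s - N).toNat + 1), f n = 0 := by
    intro n hn
    simp only [Finset.mem_range, not_lt] at hn
    have hle : s - (n : ℤ) ≤ N := by omega
    simp only [hf]
    rw [hN _ hle]
    omega
  have hsum : rowSize s β = ∑ n ∈ Finset.range ((s - N).toNat + 1), f n :=
    tsum_eq_sum hout
  have hall : ∀ n : ℕ, f n = 0 := by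
    intro n
    by_cases hn : n ∈ Finset.range ((s - N).toNat + 1)
    · rw [hsum] at hz
      exact (Finset.sum_eq_zero_iff.mp hz) n hn
    · exact hout n hn
  intro j hj
  have h1 := hall (s - j).toNat
  have h2 : s - ((s - j).toNat : ℤ) = j := by omega
  simp only [hf, h2] at h1
  have h3 := rowOK_ge ⟨hmono, N, hN⟩ j hj
  omega

lemma rowSize_ne_zero {s : ℤ} {β : ℤ → ℤ} (hnz : rowSize s β ≠ 0) :
    ∃ j : ℤ, j ≤ s ∧ j < β j := by
  by_contra hcon
  push_neg at hcon
  apply hnz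
  have : (fun n : ℕ => (β (s - n) - (s - n)).toNat) = fun _ => 0 := by
    funext n
    have := hcon (s - n)
    omega
  rw [rowSize, this, tsum_zero]

/-- A standard symbol of nonzero size has an entry `x = β^k_i`, with `i` in the
range `v_{k+1} < i ≤ v_k` (any `i ≤ v_l` when `k = l`), such that `x - 1` does not
occur as `β^s_j` for any row `s ≥ k` and column `j < i`. -/
theorem exists_removable_entry
    (l : ℕ) (hl : 1 ≤ l) (v : ℕ → ℤ)
    (hv : ∀ i, 1 ≤ i → i < l → v (i + 1) ≤ v i)
    (β : ℕ → ℤ → ℤ) (hrows : ∀ i, 1 ≤ i → i ≤ l → RowOK (v i) (β i))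
    (hstd : Standard l v β) (hsize : symSize l v β ≠ 0) :
    ∃ k : ℕ, ∃ i : ℤ, 1 ≤ k ∧ k ≤ l ∧ i ≤ v k ∧ (k < l → v (k + 1) < i) ∧
      ∀ s, k ≤ s → s ≤ l → ∀ j : ℤ, j < i → j ≤ v s → β s j ≠ β k i - 1 := by
  classical
  set T : Finset ℕ := (Finset.Icc 1 l).filter (fun s => rowSize (v s) (β s) ≠ 0) with hT
  have hTne : T.Nonempty := by
    by_contra hcon
    apply hsize
    rw [symSize]
    apply Finset.sum_eq_zero
    intro s hs
    by_contra hs0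
    exact hcon ⟨s, Finset.mem_filter.mpr ⟨hs, hs0⟩⟩
  set k := T.max' hTne with hk
  have hkmem : k ∈ T := T.max'_mem hTne
  obtain ⟨hmem1, hknz⟩ := Finset.mem_filter.mp hkmem
  obtain ⟨hk1, hkl⟩ := Finset.mem_Icc.mp hmem1
  have hid : ∀ s, k < s → s ≤ l → ∀ j : ℤ, j ≤ v s → β s j = j := by
    intro s hks hsl j hj
    have hz : rowSize (v s) (β s) = 0 := by
      by_contra h0
      have hmem : s ∈ T := Finset.mem_filter.mpr ⟨Finset.mem_Icc.mpr ⟨by omega, hsl⟩, h0⟩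
      have := Finset.le_max' T s hmem
      omega
    exact rowSize_eq_zero_iff (hrows s (by omega) hsl) hz j hj
  have hvmono : ∀ s, k + 1 ≤ s → s ≤ l → v s ≤ v (k + 1) := by
    intro s hs
    induction s, hs using Nat.le_induction with
    | base => intro _; exact le_rfl
    | succ n hn ih =>
      intro hnl
      have h1 := hv n (by omega) (by omega)
      exact le_trans h1 (ih (by omega))
  obtain ⟨j0, hj0v, hj0⟩ := rowSize_ne_zero hknz
  obtain ⟨hmonok, N, hNk⟩ := hrows k hk1 hkl
  obtain ⟨i, ⟨hiv, hibig⟩, hmin⟩ :=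
    Int.exists_least_of_bdd (P := fun i => i ≤ v k ∧ i < β k i)
      ⟨N + 1, by
        rintro z ⟨hz1, hz2⟩
        by_contra h
        push_neg at h
        have := hNk z (by omega)
        omega⟩
      ⟨j0, hj0v, hj0⟩
  have hge := rowOK_ge ⟨hmonok, N, hNk⟩
  have hbelow : ∀ j : ℤ, j < i → j ≤ v k → β k j = j := by
    intro j hji hjv
    have h1 := hge j hjv
    by_contra h
    have := hmin j ⟨hjv, by omega⟩
    omega
  have hstair : k < l → v (k + 1) < i := by
    intro hkl'
    by_contra h
    push_neg at h
    have h1 := hstd k hk1 hkl' i h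
    have h2 := hid (k + 1) (by omega) (by omega) i h
    omega
  refine ⟨k, i, hk1, hkl, hiv, hstair, ?_⟩
  intro s hks hsl j hji hjv
  rcases eq_or_lt_of_le hks with rfl | hlt
  · rw [hbelow j hji hjv]
    omega
  · have hkl' : k < l := by omega
    rw [hid s hlt hsl j hjv]
    have h2 := hvmono s (by omega) hsl
    have h3 := hstair hkl'
    omega
end

section
/- Let S be an ordered symbol with columns X_j and let σ = (σ_j) ∈ 𝔖_v be admissible for S. Then N(σ, S) := ℓ(σ) − M(S^σ) ≥ 0, with N(σ, S) = 0 if and only if σ = id. (In particular N(id, S) = 0.) -/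
/-- The height of the `j`-th column: the number of rows whose charge is at least `j`. -/
def colHeight (l : ℕ) (v : ℕ → ℤ) (j : ℤ) : ℕ :=
  ((Finset.Icc 1 l).filter (fun c => j ≤ v c)).card

/-- An ordered symbol: standard, and the entries decrease from top to bottom and
left to right (`β^1_i ≥ β^c_{i-1}` for all relevant `c`, `i`). -/
def Ordered (l : ℕ) (v : ℕ → ℤ) (β : ℕ → ℤ → ℤ) : Prop :=
  Standard l v β ∧
    ∀ c, 1 ≤ c → c ≤ l → ∀ i : ℤ, i ≤ v 1 → i - 1 ≤ v c → β c (i - 1) ≤ β 1 i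

/-- The number of inversions of a permutation of the rows `1,…,l`. -/
def permLen (l : ℕ) (σ : Equiv.Perm ℕ) : ℕ :=
  (((Finset.Icc 1 l) ×ˢ (Finset.Icc 1 l)).filter
    (fun p => p.1 < p.2 ∧ σ p.2 < σ p.1)).card

/-- The total length `ℓ(σ) = Σ_{j ≤ v 1} ℓ(σ_j)` of a tuple of column permutations. -/
noncomputable def totalLen (l : ℕ) (v : ℕ → ℤ) (σ : ℤ → Equiv.Perm ℕ) : ℕ :=
  ∑' m : ℕ, permLen l (σ (v 1 - m))

/-- The array `S^σ` obtained by permuting the entries of each column `j` by `σ j`. -/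
def actCol (β : ℕ → ℤ → ℤ) (σ : ℤ → Equiv.Perm ℕ) : ℕ → ℤ → ℤ :=
  fun c j => β (σ j c) j

/-- A valid tuple of column permutations: `σ j` only moves the rows of column `j`
(i.e. rows `1,…,h_j`), and is the identity for `j` small enough. -/
def ColPermOK (l : ℕ) (v : ℕ → ℤ) (σ : ℤ → Equiv.Perm ℕ) : Prop :=
  (∀ j : ℤ, ∀ c : ℕ, ¬(1 ≤ c ∧ c ≤ colHeight l v j) → σ j c = c) ∧
  ∃ N : ℕ, ∀ m : ℕ, N ≤ m → σ (v 1 - m) = 1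

/-- The statistic `M(T) = Σ_j Σ_{t=1}^{h_j} #{k < t : T^k_{j-1} = T^t_j}`. -/
noncomputable def Mstat (l : ℕ) (v : ℕ → ℤ) (T : ℕ → ℤ → ℤ) : ℕ :=
  ∑' m : ℕ, ∑ t ∈ Finset.Icc 1 l,
    if v 1 - m ≤ v t then
      ((Finset.Icc 1 (t - 1)).filter
        (fun k => T k (v 1 - m - 1) = T t (v 1 - m))).card
    else 0

/-- `σ` is admissible for the symbol `β`: `S^σ` is a well-defined symbol (its rows
are strictly increasing, in particular without repetition), and `σ` has minimal
length among tuples producing the same symbol `S^σ`. -/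
def Admissible (l : ℕ) (v : ℕ → ℤ) (β : ℕ → ℤ → ℤ) (σ : ℤ → Equiv.Perm ℕ) : Prop :=
  ColPermOK l v σ ∧
  (∀ c, 1 ≤ c → c ≤ l → ∀ j : ℤ, j ≤ v c →
    actCol β σ c (j - 1) < actCol β σ c j) ∧
  (∀ τ : ℤ → Equiv.Perm ℕ, ColPermOK l v τ →
    (∀ c, 1 ≤ c → c ≤ l → ∀ j : ℤ, j ≤ v c → actCol β τ c j = actCol β σ c j) →
    totalLen l v σ ≤ totalLen l v τ)

private lemma vantitone (l : ℕ) (v : ℕ → ℤ)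
    (hv : ∀ i, 1 ≤ i → i < l → v (i + 1) ≤ v i) :
    ∀ a b : ℕ, 1 ≤ a → a ≤ b → b ≤ l → v b ≤ v a := by
  intro a b h1 hab
  induction b, hab using Nat.le_induction with
  | base => intro _; exact le_rfl
  | succ n hn ih =>
    intro hnl
    exact le_trans (hv n (le_trans h1 hn) (by omega)) (ih (by omega))

private lemma betachain (l : ℕ) (v : ℕ → ℤ) (β : ℕ → ℤ → ℤ)
    (hv : ∀ i, 1 ≤ i → i < l → v (i + 1) ≤ v i) (hst : Standard l v β) :
    ∀ (p q : ℕ) (j : ℤ), 1 ≤ p → p ≤ q → q ≤ l → j ≤ v q → β p j ≤ β q j := by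
  intro p q j h1 hpq
  induction q, hpq using Nat.le_induction with
  | base => intro _ _; exact le_rfl
  | succ n hn ih =>
    intro hnl hj
    have h1n : 1 ≤ n := le_trans h1 hn
    have hvn : v (n + 1) ≤ v n := hv n h1n (by omega)
    exact le_trans (ih (by omega) (le_trans hj hvn)) (hst n h1n (by omega) j hj)

private lemma colHeight_le (l : ℕ) (v : ℕ → ℤ) (j : ℤ) : colHeight l v j ≤ l := by
  unfold colHeight
  calc _ ≤ (Finset.Icc 1 l).card := Finset.card_filter_le _ _
  _ = l := by rw [Nat.card_Icc]; omega

private lemma le_colHeight (l : ℕ) (v : ℕ → ℤ)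
    (hv : ∀ i, 1 ≤ i → i < l → v (i + 1) ≤ v i) (t : ℕ) (j : ℤ)
    (h1 : 1 ≤ t) (hl : t ≤ l) (hj : j ≤ v t) : t ≤ colHeight l v j := by
  unfold colHeight
  have hsub : Finset.Icc 1 t ⊆ (Finset.Icc 1 l).filter (fun c => j ≤ v c) := by
    intro c hc
    simp only [Finset.mem_Icc] at hc
    simp only [Finset.mem_filter, Finset.mem_Icc]
    exact ⟨⟨hc.1, hc.2.trans hl⟩, le_trans hj (vantitone l v hv c t hc.1 hc.2 hl)⟩
  calc t = (Finset.Icc 1 t).card := by rw [Nat.card_Icc]; omega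
  _ ≤ _ := Finset.card_le_card hsub

private lemma colHeight_mem (l : ℕ) (v : ℕ → ℤ)
    (hv : ∀ i, 1 ≤ i → i < l → v (i + 1) ≤ v i) (c : ℕ) (j : ℤ)
    (h1 : 1 ≤ c) (hc : c ≤ colHeight l v j) : j ≤ v c := by
  by_contra hlt
  push_neg at hlt
  have hsub : (Finset.Icc 1 l).filter (fun c' => j ≤ v c') ⊆ Finset.Ico 1 c := by
    intro c' hc'
    simp only [Finset.mem_filter, Finset.mem_Icc] at hc'
    simp only [Finset.mem_Ico]
    refine ⟨hc'.1.1, ?_⟩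
    by_contra hge
    push_neg at hge
    have := vantitone l v hv c c' h1 hge hc'.1.2
    omega
  have hcard := Finset.card_le_card hsub
  rw [Nat.card_Ico] at hcard
  unfold colHeight at hc
  omega

private lemma perm_maps (h : ℕ) (σ : Equiv.Perm ℕ)
    (hfix : ∀ c : ℕ, ¬(1 ≤ c ∧ c ≤ h) → σ c = c) (c : ℕ)
    (h1 : 1 ≤ c) (hc : c ≤ h) : 1 ≤ σ c ∧ σ c ≤ h := by
  by_contra hn
  have h2 : σ (σ c) = σ c := hfix (σ c) hn
  have h3 := σ.injective h2
  rw [h3] at hn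
  exact hn ⟨h1, hc⟩

/-- Every pair counted by `Mstat` is an inversion of the column permutation. -/
private lemma keyA (l : ℕ) (v : ℕ → ℤ) (β : ℕ → ℤ → ℤ) (σ : ℤ → Equiv.Perm ℕ)
    (hv : ∀ i, 1 ≤ i → i < l → v (i + 1) ≤ v i) (hst : Standard l v β)
    (hfix : ∀ j : ℤ, ∀ c : ℕ, ¬(1 ≤ c ∧ c ≤ colHeight l v j) → σ j c = c)
    (hrow : ∀ c, 1 ≤ c → c ≤ l → ∀ j : ℤ, j ≤ v c →
      actCol β σ c (j - 1) < actCol β σ c j)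
    (j : ℤ) (k t : ℕ) (h1k : 1 ≤ k) (hkt : k < t) (htl : t ≤ l) (hjt : j ≤ v t)
    (heq : actCol β σ k (j - 1) = actCol β σ t j) : σ j t < σ j k := by
  by_contra hle
  push_neg at hle
  have hktl : k ≤ l := le_trans hkt.le htl
  have hjk : j ≤ v k := le_trans hjt (vantitone l v hv k t h1k hkt.le htl)
  have h2 := hrow k h1k hktl j hjk
  rw [heq] at h2
  have hth : t ≤ colHeight l v j := le_colHeight l v hv t j (by omega) htl hjt
  have hkh : k ≤ colHeight l v j := le_trans hkt.le hth
  obtain ⟨hp1, hph⟩ := perm_maps (colHeight l v j) (σ j) (hfix j) k h1k hkh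
  obtain ⟨hq1, hqh⟩ := perm_maps (colHeight l v j) (σ j) (hfix j) t (by omega) hth
  have hjq : j ≤ v (σ j t) := colHeight_mem l v hv (σ j t) j hq1 hqh
  have hch := betachain l v β hv hst (σ j k) (σ j t) j hp1 hle
    (le_trans hqh (colHeight_le l v j)) hjq
  simp only [actCol] at h2
  omega

/-- If the previous column is unpermuted, the `Mstat` term vanishes. -/
private lemma keyB (l : ℕ) (v : ℕ → ℤ) (β : ℕ → ℤ → ℤ) (σ : ℤ → Equiv.Perm ℕ)
    (hv : ∀ i, 1 ≤ i → i < l → v (i + 1) ≤ v i) (hst : Standard l v β)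
    (hrow : ∀ c, 1 ≤ c → c ≤ l → ∀ j : ℤ, j ≤ v c →
      actCol β σ c (j - 1) < actCol β σ c j)
    (j : ℤ) (hσ1 : σ (j - 1) = 1)
    (k t : ℕ) (h1k : 1 ≤ k) (hkt : k < t) (htl : t ≤ l) (hjt : j ≤ v t) :
    actCol β σ k (j - 1) ≠ actCol β σ t j := by
  intro heq
  have h2 := hrow t (by omega) htl j hjt
  simp only [actCol, hσ1, Equiv.Perm.coe_one, id_eq] at h2 heq
  have hch := betachain l v β hv hst k t (j - 1) h1k hkt.le htl (by omega)
  omega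

private lemma permLen_eq_sum (l : ℕ) (σ : Equiv.Perm ℕ) :
    permLen l σ = ∑ t ∈ Finset.Icc 1 l,
      ((Finset.Icc 1 l).filter (fun k => k < t ∧ σ t < σ k)).card := by
  unfold permLen
  rw [Finset.card_filter, Finset.sum_product_right]
  refine Finset.sum_congr rfl (fun t _ => ?_)
  rw [Finset.card_filter]

private lemma permLen_one (l : ℕ) : permLen l (1 : Equiv.Perm ℕ) = 0 := by
  unfold permLen
  rw [Finset.card_eq_zero, Finset.filter_eq_empty_iff]
  intro p _
  simp only [Equiv.Perm.coe_one, id_eq, not_and]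
  omega

/-- A nontrivial column permutation has at least one inversion in range. -/
private lemma keyD (l h : ℕ) (σ : Equiv.Perm ℕ)
    (hfix : ∀ c : ℕ, ¬(1 ≤ c ∧ c ≤ h) → σ c = c) (hhl : h ≤ l) (hσ : σ ≠ 1) :
    0 < permLen l σ := by
  classical
  have hex : ∃ c, σ c ≠ c := by
    by_contra hno
    push_neg at hno
    exact hσ (Equiv.ext hno)
  set c0 := Nat.find hex with hc0def
  have hc0 : σ c0 ≠ c0 := Nat.find_spec hex
  have hmin : ∀ c, c < c0 → σ c = c := fun c hc => not_ne_iff.mp (Nat.find_min hex hc)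
  have hrange : 1 ≤ c0 ∧ c0 ≤ h := by
    by_contra hn
    exact hc0 (hfix c0 hn)
  have hge : c0 < σ c0 := by
    rcases lt_or_ge c0 (σ c0) with h' | h'
    · exact h'
    · exfalso
      have h'' : σ c0 < c0 := lt_of_le_of_ne h' hc0
      have h3 : σ (σ c0) = σ c0 := hmin (σ c0) h''
      exact hc0 (σ.injective h3)
  have hσd : σ (σ.symm c0) = c0 := σ.apply_symm_apply c0
  have hdne : σ.symm c0 ≠ c0 := by
    intro h'
    rw [h'] at hσd
    exact hc0 hσd
  have hdgt : c0 < σ.symm c0 := by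
    rcases lt_or_ge (σ.symm c0) c0 with h' | h'
    · exfalso
      have := hmin _ h'
      rw [hσd] at this
      exact hdne this.symm
    · exact lt_of_le_of_ne h' (Ne.symm hdne)
  have hdrange : 1 ≤ σ.symm c0 ∧ σ.symm c0 ≤ h := by
    by_contra hn
    have h' := hfix _ hn
    rw [hσd] at h'
    exact hdne h'.symm
  unfold permLen
  rw [Finset.card_pos]
  refine ⟨(c0, σ.symm c0), ?_⟩
  simp only [Finset.mem_filter, Finset.mem_product, Finset.mem_Icc]
  exact ⟨⟨⟨hrange.1, hrange.2.trans hhl⟩, ⟨by omega, hdrange.2.trans hhl⟩⟩,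
    hdgt, by rw [hσd]; exact hge⟩

private noncomputable def Gterm (l : ℕ) (v : ℕ → ℤ) (T : ℕ → ℤ → ℤ) (m : ℕ) : ℕ :=
  ∑ t ∈ Finset.Icc 1 l,
    if v 1 - m ≤ v t then
      ((Finset.Icc 1 (t - 1)).filter
        (fun k => T k (v 1 - m - 1) = T t (v 1 - m))).card
    else 0

private lemma Mstat_eq (l : ℕ) (v : ℕ → ℤ) (T : ℕ → ℤ → ℤ) :
    Mstat l v T = ∑' m : ℕ, Gterm l v T m := rfl

/-- For an ordered symbol `S` and an admissible `σ`, the number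
`N(σ,S) = ℓ(σ) − M(S^σ)` is nonnegative, and it is zero iff `σ` is the identity. -/
theorem ordered_positive
    (l : ℕ) (hl : 1 ≤ l) (v : ℕ → ℤ)
    (hv : ∀ i, 1 ≤ i → i < l → v (i + 1) ≤ v i)
    (β : ℕ → ℤ → ℤ) (hrows : ∀ i, 1 ≤ i → i ≤ l → RowOK (v i) (β i))
    (hord : Ordered l v β)
    (σ : ℤ → Equiv.Perm ℕ) (hadm : Admissible l v β σ) :
    Mstat l v (actCol β σ) ≤ totalLen l v σ ∧
      (totalLen l v σ = Mstat l v (actCol β σ) ↔ ∀ j, σ j = 1) := by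
  classical
  obtain ⟨⟨hfix, N, hN⟩, hrow, _hmin⟩ := hadm
  have hst : Standard l v β := hord.1
  -- Gterm vanishes when the previous column is unpermuted
  have hGzero : ∀ m : ℕ, σ (v 1 - (m : ℤ) - 1) = 1 → Gterm l v (actCol β σ) m = 0 := by
    intro m h1
    apply Finset.sum_eq_zero
    intro t ht
    simp only [Finset.mem_Icc] at ht
    split_ifs with hjt
    · rw [Finset.card_eq_zero, Finset.filter_eq_empty_iff]
      intro k hk
      simp only [Finset.mem_Icc] at hk
      exact keyB l v β σ hv hst hrow _ h1 k t hk.1 (by omega) ht.2 hjt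
    · rfl
  -- Termwise inequality: Gterm m ≤ permLen of column permutation
  have hGF : ∀ m : ℕ, Gterm l v (actCol β σ) m ≤ permLen l (σ (v 1 - (m : ℤ))) := by
    intro m
    rw [permLen_eq_sum]
    apply Finset.sum_le_sum
    intro t ht
    simp only [Finset.mem_Icc] at ht
    split_ifs with hjt
    · apply Finset.card_le_card
      intro k hk
      simp only [Finset.mem_filter, Finset.mem_Icc] at hk ⊢
      have hkt : k < t := by omega
      exact ⟨⟨hk.1.1, by omega⟩, hkt,
        keyA l v β σ hv hst hfix hrow _ k t hk.1.1 hkt ht.2 hjt hk.2⟩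
    · exact Nat.zero_le _
  have hFzero : ∀ m : ℕ, N ≤ m → permLen l (σ (v 1 - (m : ℤ))) = 0 := by
    intro m hm
    rw [hN m hm, permLen_one]
  have hGzero' : ∀ m : ℕ, N ≤ m → Gterm l v (actCol β σ) m = 0 := by
    intro m hm
    apply hGzero
    have hcast : v 1 - (m : ℤ) - 1 = v 1 - ((m + 1 : ℕ) : ℤ) := by push_cast; ring
    rw [hcast]
    exact hN (m + 1) (by omega)
  have htot : totalLen l v σ = ∑ m ∈ Finset.range N, permLen l (σ (v 1 - (m : ℤ))) := by
    unfold totalLen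
    exact tsum_eq_sum (fun m hm =>
      hFzero m (by simp only [Finset.mem_range, not_lt] at hm; exact hm))
  have hMs : Mstat l v (actCol β σ) = ∑ m ∈ Finset.range N, Gterm l v (actCol β σ) m := by
    rw [Mstat_eq]
    exact tsum_eq_sum (fun m hm =>
      hGzero' m (by simp only [Finset.mem_range, not_lt] at hm; exact hm))
  refine ⟨by rw [hMs, htot]; exact Finset.sum_le_sum (fun m _ => hGF m), ?_, ?_⟩
  · -- equality implies identity
    intro heq
    have hterm : ∀ m ∈ Finset.range N,
        Gterm l v (actCol β σ) m = permLen l (σ (v 1 - (m : ℤ))) :=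
      (Finset.sum_eq_sum_iff_of_le (fun m _ => hGF m)).mp
        (by rw [← hMs, ← htot]; exact heq.symm)
    intro j
    by_contra hne
    have hjv : j ≤ v 1 := by
      by_contra hgt
      push_neg at hgt
      apply hne
      apply Equiv.ext
      intro c
      have h0 : colHeight l v j = 0 := by
        unfold colHeight
        rw [Finset.card_eq_zero, Finset.filter_eq_empty_iff]
        intro c' hc'
        simp only [Finset.mem_Icc] at hc'
        have := vantitone l v hv 1 c' le_rfl hc'.1 hc'.2
        omega
      have := hfix j c (by rw [h0]; omega)
      simpa using this
    set S : Finset ℕ := (Finset.range N).filter (fun m => σ (v 1 - (m : ℤ)) ≠ 1) with hS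
    have hmem : (v 1 - j).toNat ∈ S := by
      have hcast : ((v 1 - j).toNat : ℤ) = v 1 - j := Int.toNat_of_nonneg (by omega)
      have hjeq : v 1 - ((v 1 - j).toNat : ℤ) = j := by rw [hcast]; ring
      simp only [hS, Finset.mem_filter, Finset.mem_range]
      constructor
      · by_contra hge
        push_neg at hge
        apply hne
        have := hN _ hge
        rwa [hjeq] at this
      · rw [hjeq]; exact hne
    have hSne : S.Nonempty := ⟨_, hmem⟩
    set m0 := S.max' hSne with hm0
    have hm0S : m0 ∈ S := S.max'_mem hSne
    simp only [hS, Finset.mem_filter, Finset.mem_range] at hm0S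
    have hnext : σ (v 1 - (m0 : ℤ) - 1) = 1 := by
      have h1 : v 1 - (m0 : ℤ) - 1 = v 1 - ((m0 + 1 : ℕ) : ℤ) := by push_cast; ring
      rw [h1]
      by_cases hc : N ≤ m0 + 1
      · exact hN _ hc
      · by_contra hne1
        have hmem1 : m0 + 1 ∈ S := by
          simp only [hS, Finset.mem_filter, Finset.mem_range]
          exact ⟨by omega, hne1⟩
        have := Finset.le_max' S _ hmem1
        omega
    have hG0 : Gterm l v (actCol β σ) m0 = 0 := hGzero m0 hnext
    have hF0 : Gterm l v (actCol β σ) m0 = permLen l (σ (v 1 - (m0 : ℤ))) :=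
      hterm m0 (by simp only [Finset.mem_range]; exact hm0S.1)
    have hpos : 0 < permLen l (σ (v 1 - (m0 : ℤ))) :=
      keyD l (colHeight l v (v 1 - (m0 : ℤ))) (σ (v 1 - (m0 : ℤ)))
        (hfix _) (colHeight_le l v _) hm0S.2
    omega
  · -- identity implies equality
    intro hid
    have h1 : totalLen l v σ = 0 := by
      rw [htot]
      apply Finset.sum_eq_zero
      intro m _
      rw [hid, permLen_one]
    have h2 : Mstat l v (actCol β σ) = 0 := by
      rw [hMs]
      apply Finset.sum_eq_zero
      intro m _
      exact hGzero m (hid _)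
    rw [h1, h2]
end

section
/- Let S be an ordered symbol and σ = (σ_j)_{j ≤ v_1} ∈ 𝔖_v admissible for S. If in column X_j of S the common entry x with column X_{j-1} appears r times (at the top rows 1,...,r of X_j), and in X_j^{σ_j} the entries equal to x sit in rows i_1 < ... < i_r, then Σ_{t=1}^{h_j} #{k < t : β^{σ_{j-1}(k)}_{j-1} = β^{σ_j(t)}_j} ≤ Σ_{s=1}^r (i_s − s) ≤ ℓ(σ_j). -/
/-- A down-closed finset of positive naturals is an initial interval. -/
lemma downclosed_eq_Icc (F : Finset ℕ) (h0 : 0 ∉ F)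
    (hF : ∀ c ∈ F, ∀ b, 1 ≤ b → b ≤ c → b ∈ F) :
    F = Finset.Icc 1 F.card := by
  rcases F.eq_empty_or_nonempty with rfl | hne
  · simp
  · have hm : F = Finset.Icc 1 (F.max' hne) := by
      apply Finset.Subset.antisymm
      · intro c hc
        simp only [Finset.mem_Icc]
        exact ⟨Nat.one_le_iff_ne_zero.2 (fun h => h0 (h ▸ hc)), F.le_max' c hc⟩
      · intro b hb
        simp only [Finset.mem_Icc] at hb
        exact hF _ (F.max'_mem hne) b hb.1 hb.2
    rw [hm]; simp [Nat.card_Icc]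

/-- If `x` is the common entry of columns `j-1` and `j` of the ordered symbol `S`,
appearing `r` times at the top rows `1,…,r` of column `j`, and sitting in rows
`i_1 < … < i_r` of the permuted column `X_j^{σ_j}`, then
`Σ_t #{k < t : β^{σ_{j-1}(k)}_{j-1} = β^{σ_j(t)}_j} ≤ Σ_s (i_s − s) ≤ ℓ(σ_j)`. -/
theorem admissible_length_bound
    (l : ℕ) (hl : 1 ≤ l) (v : ℕ → ℤ)
    (hv : ∀ i, 1 ≤ i → i < l → v (i + 1) ≤ v i)
    (β : ℕ → ℤ → ℤ) (hrows : ∀ i, 1 ≤ i → i ≤ l → RowOK (v i) (β i))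
    (hord : Ordered l v β)
    (σ : ℤ → Equiv.Perm ℕ) (hadm : Admissible l v β σ)
    (j : ℤ) (hj : j ≤ v 1) (x : ℤ) (r : ℕ) (hr : 1 ≤ r)
    (htop : ∀ t, 1 ≤ t → t ≤ colHeight l v j → (β t j = x ↔ t ≤ r))
    (hbot : ∃ c, 1 ≤ c ∧ c ≤ colHeight l v (j - 1) ∧ β c (j - 1) = x)
    (i : Fin r → ℕ) (hmono : StrictMono i)
    (hrange : ∀ s : Fin r, 1 ≤ i s ∧ i s ≤ colHeight l v j)
    (hplaces : ∀ t, 1 ≤ t → t ≤ colHeight l v j →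
      (β (σ j t) j = x ↔ ∃ s : Fin r, i s = t)) :
    (∑ t ∈ Finset.Icc 1 (colHeight l v j),
        ((Finset.Icc 1 (t - 1)).filter
          (fun k => β (σ (j - 1) k) (j - 1) = β (σ j t) j)).card)
      ≤ ∑ s : Fin r, (i s - ((s : ℕ) + 1)) ∧
    ∑ s : Fin r, (i s - ((s : ℕ) + 1)) ≤ permLen l (σ j) := by
  obtain ⟨hstd, hordd⟩ := hord
  obtain ⟨⟨hfix, -⟩, hstrict, -⟩ := hadm
  -- weak monotonicity of v
  have hvmono : ∀ b a : ℕ, 1 ≤ a → a ≤ b → b ≤ l → v b ≤ v a := by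
    intro b
    induction b with
    | zero => intro a h1 h2 _; omega
    | succ n ih =>
      intro a h1 h2 hbl
      rcases Nat.lt_or_ge a (n + 1) with hlt | hge
      · have han : a ≤ n := by omega
        have h1n : 1 ≤ n := le_trans h1 han
        have := ih a h1 han (by omega)
        have h2' : v (n + 1) ≤ v n := hv n h1n (by omega)
        omega
      · have : a = n + 1 := by omega
        subst this; exact le_refl _
  -- column membership characterization
  have hcolle : ∀ j' : ℤ, colHeight l v j' ≤ l := by
    intro j'
    have : ((Finset.Icc 1 l).filter (fun c => j' ≤ v c)).card ≤ (Finset.Icc 1 l).card :=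
      Finset.card_filter_le _ _
    simpa [colHeight, Nat.card_Icc] using this
  have hcol : ∀ j' : ℤ, ∀ c : ℕ, 1 ≤ c → c ≤ l → (j' ≤ v c ↔ c ≤ colHeight l v j') := by
    intro j' c hc1 hc2
    have hF : (Finset.Icc 1 l).filter (fun c => j' ≤ v c)
        = Finset.Icc 1 (colHeight l v j') := by
      apply downclosed_eq_Icc
      · simp
      · intro a ha b hb1 hb2
        simp only [Finset.mem_filter, Finset.mem_Icc] at ha ⊢
        exact ⟨⟨hb1, le_trans hb2 ha.1.2⟩, le_trans ha.2 (hvmono a b hb1 hb2 ha.1.2)⟩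
    constructor
    · intro hle
      have : c ∈ (Finset.Icc 1 l).filter (fun c => j' ≤ v c) := by
        simp only [Finset.mem_filter, Finset.mem_Icc]; exact ⟨⟨hc1, hc2⟩, hle⟩
      rw [hF] at this
      simpa using (Finset.mem_Icc.1 this).2
    · intro hle
      have : c ∈ Finset.Icc 1 (colHeight l v j') := Finset.mem_Icc.2 ⟨hc1, hle⟩
      rw [← hF] at this
      exact (Finset.mem_filter.1 this).2
  set h := colHeight l v j with hh
  set h' := colHeight l v (j - 1) with hh'
  have hhh' : h ≤ h' := by
    apply Finset.card_le_card
    intro c hc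
    simp only [Finset.mem_filter] at hc ⊢
    exact ⟨hc.1, by omega⟩
  have h1h : 1 ≤ h := by
    have : (1 : ℕ) ∈ (Finset.Icc 1 l).filter (fun c => j ≤ v c) := by
      simp only [Finset.mem_filter, Finset.mem_Icc]
      exact ⟨⟨le_refl _, hl⟩, hj⟩
    exact Finset.card_pos.2 ⟨1, this⟩
  have hx1 : β 1 j = x := (htop 1 (le_refl _) h1h).2 hr
  -- column j entries are ≥ x
  have hchain : ∀ c, 1 ≤ c → c ≤ h → x ≤ β c j := by
    intro c
    induction c with
    | zero => intro h1 _; omega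
    | succ n ih =>
      intro h1 h2
      rcases Nat.eq_zero_or_pos n with hn0 | hn1
      · subst hn0; rw [hx1.symm]
      · have hvn : j ≤ v (n + 1) := (hcol j (n + 1) h1 (le_trans h2 (hcolle j))).2 h2
        have := hstd n hn1 (by have := hcolle j; omega) j hvn
        have := ih hn1 (by omega)
        omega
  -- σ j' maps [1, colHeight j'] to itself
  have hσmem : ∀ j' : ℤ, ∀ c, 1 ≤ c → c ≤ colHeight l v j' →
      1 ≤ σ j' c ∧ σ j' c ≤ colHeight l v j' := by
    intro j' c hc1 hc2
    by_contra hcon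
    have h3 : σ j' (σ j' c) = σ j' c := hfix j' _ hcon
    have h4 : σ j' c = c := (σ j').injective h3
    rw [h4] at hcon
    exact hcon ⟨hc1, hc2⟩
  -- entries of permuted column j-1 are ≤ x
  have hupper : ∀ k, 1 ≤ k → k ≤ h' → β (σ (j - 1) k) (j - 1) ≤ x := by
    intro k hk1 hk2
    obtain ⟨hc1, hc2⟩ := hσmem (j - 1) k hk1 hk2
    have := hordd (σ (j - 1) k) hc1 (le_trans hc2 (hcolle (j - 1))) j hj
      ((hcol (j - 1) (σ (j - 1) k) hc1 (le_trans hc2 (hcolle (j - 1)))).2 hc2)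
    omega
  -- the diagonal strict inequality at rows i s
  have hdiag : ∀ s : Fin r, β (σ (j - 1) (i s)) (j - 1) < x := by
    intro s
    have h1 := (hrange s).1
    have h2 := (hrange s).2
    have hvis : j ≤ v (i s) := (hcol j (i s) h1 (le_trans h2 (hcolle j))).2 h2
    have := hstrict (i s) h1 (le_trans h2 (hcolle j)) j hvis
    simp only [actCol] at this
    have hx : β (σ j (i s)) j = x := (hplaces (i s) h1 h2).2 ⟨s, rfl⟩
    omega
  -- i s ≥ s + 1
  have his_ge : ∀ s : Fin r, (s : ℕ) + 1 ≤ i s := by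
    have key : ∀ m : ℕ, ∀ hm : m < r, m + 1 ≤ i ⟨m, hm⟩ := by
      intro m
      induction m with
      | zero => intro hm; exact (hrange ⟨0, hm⟩).1
      | succ n ih =>
        intro hm
        have h1 : n < r := by omega
        have h2 : (⟨n, h1⟩ : Fin r) < ⟨n + 1, hm⟩ := by
          simp [Fin.mk_lt_mk]
        have := hmono h2
        have := ih h1
        omega
    intro s
    have := key s.1 s.2
    simpa using this
  -- the key counting set
  have hcard : ∀ s : Fin r,
      ((Finset.Icc 1 (i s - 1)).filter (fun k => ¬ ∃ s' : Fin r, i s' = k)).card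
        = i s - ((s : ℕ) + 1) := by
    intro s
    have h1 := (hrange s).1
    have himg : (Finset.Icc 1 (i s - 1)).filter (fun k => ∃ s' : Fin r, i s' = k)
        = Finset.image i (Finset.univ.filter (fun s' : Fin r => s' < s)) := by
      ext k
      simp only [Finset.mem_filter, Finset.mem_Icc, Finset.mem_image, Finset.mem_univ,
        true_and]
      constructor
      · rintro ⟨⟨hk1, hk2⟩, s', rfl⟩
        refine ⟨s', ?_, rfl⟩
        have : i s' < i s := by omega
        exact hmono.lt_iff_lt.1 this
      · rintro ⟨s', hs', rfl⟩
        have hlt : i s' < i s := hmono hs'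
        exact ⟨⟨(hrange s').1, by omega⟩, s', rfl⟩
    have hcnt : ((Finset.Icc 1 (i s - 1)).filter (fun k => ∃ s' : Fin r, i s' = k)).card
        = (s : ℕ) := by
      rw [himg, Finset.card_image_of_injective _ hmono.injective]
      have : Finset.image Fin.val (Finset.univ.filter (fun s' : Fin r => s' < s))
          = Finset.range (s : ℕ) := by
        ext n
        simp only [Finset.mem_image, Finset.mem_filter, Finset.mem_univ, true_and,
          Finset.mem_range]
        constructor
        · rintro ⟨s', hs', rfl⟩; exact hs'
        · intro hn
          exact ⟨⟨n, by omega⟩, by simpa [Fin.lt_iff_val_lt_val] using hn, rfl⟩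
      have := congrArg Finset.card this
      rwa [Finset.card_image_of_injective _ Fin.val_injective, Finset.card_range] at this
    have htot := Finset.card_filter_add_card_filter_not
      (s := Finset.Icc 1 (i s - 1)) (p := fun k => ∃ s' : Fin r, i s' = k)
    have hIcc : (Finset.Icc 1 (i s - 1)).card = i s - 1 := by
      rw [Nat.card_Icc]; omega
    have := his_ge s
    omega
  constructor
  · -- first inequality
    have hzero : ∀ t ∈ (Finset.Icc 1 h).filter (fun t => ¬ ∃ s : Fin r, i s = t),
        ((Finset.Icc 1 (t - 1)).filter
          (fun k => β (σ (j - 1) k) (j - 1) = β (σ j t) j)).card = 0 := by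
      intro t ht
      simp only [Finset.mem_filter, Finset.mem_Icc] at ht
      obtain ⟨⟨ht1, ht2⟩, htn⟩ := ht
      rw [Finset.card_eq_zero, Finset.filter_eq_empty_iff]
      intro k hk
      simp only [Finset.mem_Icc] at hk
      have hku : β (σ (j - 1) k) (j - 1) ≤ x :=
        hupper k hk.1 (by omega)
      obtain ⟨hm1, hm2⟩ := hσmem j t ht1 ht2
      have hge : x ≤ β (σ j t) j := hchain _ hm1 hm2
      have hne : β (σ j t) j ≠ x := fun hx => htn ((hplaces t ht1 ht2).1 hx)
      omega
    have hsplit := Finset.sum_filter_add_sum_filter_not (Finset.Icc 1 h)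
      (fun t => ∃ s : Fin r, i s = t)
      (fun t => ((Finset.Icc 1 (t - 1)).filter
        (fun k => β (σ (j - 1) k) (j - 1) = β (σ j t) j)).card)
    have hzero' : ∑ t ∈ (Finset.Icc 1 h).filter (fun t => ¬ ∃ s : Fin r, i s = t),
        ((Finset.Icc 1 (t - 1)).filter
          (fun k => β (σ (j - 1) k) (j - 1) = β (σ j t) j)).card = 0 :=
      Finset.sum_eq_zero hzero
    have himg : (Finset.Icc 1 h).filter (fun t => ∃ s : Fin r, i s = t)
        = Finset.image i Finset.univ := by
      ext t
      simp only [Finset.mem_filter, Finset.mem_Icc, Finset.mem_image, Finset.mem_univ,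
        true_and]
      constructor
      · rintro ⟨-, s, rfl⟩; exact ⟨s, rfl⟩
      · rintro ⟨s, rfl⟩; exact ⟨⟨(hrange s).1, (hrange s).2⟩, s, rfl⟩
    have hbound : ∀ s : Fin r,
        ((Finset.Icc 1 (i s - 1)).filter
          (fun k => β (σ (j - 1) k) (j - 1) = β (σ j (i s)) j)).card
          ≤ i s - ((s : ℕ) + 1) := by
      intro s
      rw [← hcard s]
      apply Finset.card_le_card
      intro k hk
      simp only [Finset.mem_filter, Finset.mem_Icc] at hk ⊢
      refine ⟨hk.1, ?_⟩
      rintro ⟨s', rfl⟩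
      have hx : β (σ j (i s)) j = x := (hplaces (i s) (hrange s).1 (hrange s).2).2 ⟨s, rfl⟩
      have := hdiag s'
      omega
    calc ∑ t ∈ Finset.Icc 1 h,
          ((Finset.Icc 1 (t - 1)).filter
            (fun k => β (σ (j - 1) k) (j - 1) = β (σ j t) j)).card
        = ∑ t ∈ (Finset.Icc 1 h).filter (fun t => ∃ s : Fin r, i s = t),
          ((Finset.Icc 1 (t - 1)).filter
            (fun k => β (σ (j - 1) k) (j - 1) = β (σ j t) j)).card := by
          rw [← hsplit, hzero']; omega
      _ = ∑ s : Fin r, ((Finset.Icc 1 (i s - 1)).filter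
            (fun k => β (σ (j - 1) k) (j - 1) = β (σ j (i s)) j)).card := by
          rw [himg, Finset.sum_image]
          intro a _ b _ hab
          exact hmono.injective hab
      _ ≤ ∑ s : Fin r, (i s - ((s : ℕ) + 1)) := Finset.sum_le_sum (fun s _ => hbound s)
  · -- second inequality
    set E := ((Finset.Icc 1 l ×ˢ Finset.Icc 1 l).filter
      (fun p => p.1 < p.2 ∧ σ j p.2 < σ j p.1)) with hE
    set D : Fin r → Finset (ℕ × ℕ) := fun s =>
      ((Finset.Icc 1 (i s - 1)).filter (fun k => ¬ ∃ s' : Fin r, i s' = k)).image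
        (fun k => (k, i s)) with hD
    have hDsub : ∀ s : Fin r, D s ⊆ E := by
      intro s p hp
      simp only [hD, Finset.mem_image, Finset.mem_filter, Finset.mem_Icc] at hp
      obtain ⟨k, ⟨⟨hk1, hk2⟩, hkn⟩, rfl⟩ := hp
      have h1 := (hrange s).1
      have h2 := (hrange s).2
      have hkh : k ≤ h := by omega
      obtain ⟨hm1, hm2⟩ := hσmem j k hk1 hkh
      obtain ⟨hn1, hn2⟩ := hσmem j (i s) h1 h2
      have hxis : β (σ j (i s)) j = x := (hplaces (i s) h1 h2).2 ⟨s, rfl⟩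
      have hσis : σ j (i s) ≤ r := (htop _ hn1 hn2).1 hxis
      have hσk : r < σ j k := by
        by_contra hle
        have : β (σ j k) j = x := (htop _ hm1 hm2).2 (by omega)
        exact hkn ((hplaces k hk1 hkh).1 this)
      simp only [hE, Finset.mem_filter, Finset.mem_product, Finset.mem_Icc]
      have hle := hcolle j
      exact ⟨⟨⟨hk1, by omega⟩, ⟨h1, by omega⟩⟩, by omega, by omega⟩
    have hDdisj : ∀ s ∈ (Finset.univ : Finset (Fin r)), ∀ s' ∈ (Finset.univ : Finset (Fin r)),
        s ≠ s' → Disjoint (D s) (D s') := by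
      intro s _ s' _ hss
      rw [Finset.disjoint_left]
      intro p hp hp'
      simp only [hD, Finset.mem_image] at hp hp'
      obtain ⟨k, -, rfl⟩ := hp
      obtain ⟨k', -, hk'⟩ := hp'
      have : i s' = i s := congrArg Prod.snd hk'
      exact hss (hmono.injective this.symm)
    have hDcard : ∀ s : Fin r, (D s).card = i s - ((s : ℕ) + 1) := by
      intro s
      rw [hD]
      rw [Finset.card_image_of_injective _ (fun a b hab => congrArg Prod.fst hab)]
      exact hcard s
    calc ∑ s : Fin r, (i s - ((s : ℕ) + 1))
        = ∑ s : Fin r, (D s).card := by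
          exact Finset.sum_congr rfl (fun s _ => (hDcard s).symm)
      _ = (Finset.univ.biUnion D).card := (Finset.card_biUnion hDdisj).symm
      _ ≤ E.card := Finset.card_le_card (Finset.biUnion_subset.2 (fun s _ => hDsub s))
      _ = permLen l (σ j) := rfl
end

section
/- Let S be a standard l-symbol satisfying (♥) such that all rows below row c are empty-partition rows (β^i_j = j for i > c), let x be the smallest integer with x ∈ β^c and x−1 ∉ β^c, let c' be minimal with x ∈ β^{c'}, and assume some row contains both x and x−1, with d (resp. d') maximal (resp. minimal) such that x−1 ∈ β^d (resp. β^{d'}). Then the symbol S' obtained from S by replacing the entry x by x−1 in exactly those rows i with 1 ≤ i < d' or d < i ≤ c is again a standard symbol satisfying (♥), and has strictly smaller size than S. -/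
/-- Condition (♥): for all `i < j < k`, the Leclerc–Miyachi injections of the symbol
satisfy `ψ_{k,i} = ψ_{j,i} ∘ ψ_{k,j}` on the entries of row `k`. -/
def Heart (l : ℕ) (v : ℕ → ℤ) (β : ℕ → ℤ → ℤ) : Prop :=
  ∀ i j k, 1 ≤ i → i < j → j < k → k ≤ l →
    ∀ ψki ψji ψkj : ℤ → ℤ,
      IsLMset (Row v β i) (Row v β k) ψki →
      IsLMset (Row v β i) (Row v β j) ψji →
      IsLMset (Row v β j) (Row v β k) ψkj →
      ∀ x ∈ Row v β k, ψki x = ψji (ψkj x)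

/-!
Write `σ` for the transposition of `x` and `x - 1`. Every row of the new symbol is the image
under `σ` of the old row: the modified rows contain `x` but not `x - 1`, the rows between `d'`
and `d` contain both, and the rows below `c` contain neither. Both memberships come from (♥).
If `y` lies in rows `i < k`, then `ψ_{k,i} y = y` forces `y` into every row in between. And a
row `a` above a row `e` that contains `x - 1` and `x` cannot miss `x`: otherwise
`ψ_{c,a} x = ψ_{e,a} (ψ_{c,e} x) = ψ_{e,a} x < ψ_{e,a} (x - 1)`, although `ψ_{e,a} (x - 1)` is
still available to `ψ_{c,a}` at `x`.

A Leclerc–Miyachi injection between two new rows that both contain `x - 1` (or whose lower row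
lies below `x - 1`) pulls back along `σ` to one between the old rows: `x - 1` is a common fixed
point, and once it is removed `σ` is order preserving. So (♥) passes to the new symbol.
Standardness could only fail where rows `d` and `d + 1` carry `x` in the same column, but then
`x - 1` would lie in row `d + 1`. The size drops with the entry `x` of row `c`.
-/

def lmCandidates (A B : Set ℤ) (Ψ : ℤ → ℤ) (y : ℤ) : Set ℤ :=
  {z | z ∈ A ∧ z ≤ y ∧ ∀ y' ∈ B, y' < y → Ψ y' ≠ z}

theorem lmCandidates_diff_singleton {A B : Set ℤ} {Ψ : ℤ → ℤ} {p y : ℤ} (hpB : p ∈ B)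
    (hp : Ψ p = p) (hy : y ≠ p) :
    lmCandidates (A \ {p}) (B \ {p}) Ψ y = lmCandidates A B Ψ y := by
  ext z
  simp only [lmCandidates, Set.mem_ofPred_eq, Set.mem_sdiff, Set.mem_singleton_iff]
  rcases lt_or_gt_of_ne hy with hlt | hlt
  · constructor
    · rintro ⟨⟨hzA, -⟩, hzy, hne⟩
      exact ⟨hzA, hzy, fun y' hy' hlt' => hne y' ⟨hy', by omega⟩ hlt'⟩
    · rintro ⟨hzA, hzy, hne⟩
      exact ⟨⟨hzA, by omega⟩, hzy, fun y' hy' hlt' => hne y' hy'.1 hlt'⟩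
  · constructor
    · rintro ⟨⟨hzA, hzp⟩, hzy, hne⟩
      refine ⟨hzA, hzy, fun y' hy' hlt' => ?_⟩
      rcases eq_or_ne y' p with rfl | hy'p
      · rw [hp]
        exact fun h => hzp h.symm
      · exact hne y' ⟨hy', hy'p⟩ hlt'
    · rintro ⟨hzA, hzy, hne⟩
      exact ⟨⟨hzA, fun hzp => hne p hpB hlt (hp.trans hzp.symm)⟩, hzy,
        fun y' hy' hlt' => hne y' hy'.1 hlt'⟩

theorem Equiv.swap_image_eq_self {α : Type*} [DecidableEq α] {a b : α} {S : Set α}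
    (h : a ∈ S ↔ b ∈ S) : Equiv.swap a b '' S = S := by
  ext z
  rw [Set.mem_image_equiv, Equiv.symm_swap]
  rcases eq_or_ne z a with rfl | hza
  · rw [Equiv.swap_apply_left, h]
  rcases eq_or_ne z b with rfl | hzb
  · rw [Equiv.swap_apply_right, h]
  · rw [Equiv.swap_apply_of_ne_of_ne hza hzb]

theorem strictMonoOn_swap_sub_one {x : ℤ} {S : Set ℤ} (hx : x ∉ S) :
    StrictMonoOn (Equiv.swap x (x - 1)) S := by
  intro a ha b hb hab
  have hax : a ≠ x := fun h => hx (h ▸ ha)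
  have hbx : b ≠ x := fun h => hx (h ▸ hb)
  simp only [Equiv.swap_apply_def, hax, hbx, if_false]
  split_ifs <;> omega

namespace IsLMset

variable {A A' B : Set ℤ} {Ψ Φ : ℤ → ℤ} {x y y₁ y₂ p : ℤ}

theorem apply_mem (h : IsLMset A B Ψ) (hy : y ∈ B) : Ψ y ∈ A := (h y hy).1.1

theorem apply_le (h : IsLMset A B Ψ) (hy : y ∈ B) : Ψ y ≤ y := (h y hy).1.2.1

theorem injOn (h : IsLMset A B Ψ) : Set.InjOn Ψ B := by
  intro y₁ hy₁ y₂ hy₂ heq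
  by_contra hne
  rcases lt_or_gt_of_ne hne with hlt | hlt
  · exact (h y₂ hy₂).1.2.2 y₁ hy₁ hlt heq
  · exact (h y₁ hy₁).1.2.2 y₂ hy₂ hlt heq.symm

theorem apply_eq_self (h : IsLMset A B Ψ) (hA : y ∈ A) (hB : y ∈ B) : Ψ y = y :=
  le_antisymm (h.apply_le hB) <| (h y hB).2
    ⟨hA, le_rfl, fun _ hy' hlt => (lt_of_le_of_lt (h.apply_le hy') hlt).ne⟩

theorem apply_lt_apply (h : IsLMset A B Ψ) (hy₁ : y₁ ∈ B) (hy₂ : y₂ ∈ B) (hlt : y₁ < y₂)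
    (hle : Ψ y₂ ≤ y₁) : Ψ y₂ < Ψ y₁ := by
  refine lt_of_le_of_ne ((h y₁ hy₁).2 ⟨h.apply_mem hy₂, hle, fun y' hy' hlt' heq => ?_⟩) ?_
  · have := h.injOn hy' hy₂ heq
    omega
  · exact fun heq => hlt.ne (h.injOn hy₂ hy₁ heq).symm

theorem congr (hA : ∀ y ∈ B, ∀ z ≤ y, z ∈ A ↔ z ∈ A') (hΨ : Set.EqOn Ψ Φ B)
    (h : IsLMset A B Ψ) : IsLMset A' B Φ := by
  intro y hy
  have hset : lmCandidates A' B Φ y = lmCandidates A B Ψ y := by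
    ext z
    simp only [lmCandidates, Set.mem_ofPred_eq]
    constructor
    · rintro ⟨hz, hzy, hne⟩
      exact ⟨(hA y hy z hzy).2 hz, hzy, fun y' hy' hlt => hΨ hy' ▸ hne y' hy' hlt⟩
    · rintro ⟨hz, hzy, hne⟩
      exact ⟨(hA y hy z hzy).1 hz, hzy, fun y' hy' hlt => hΨ hy' ▸ hne y' hy' hlt⟩
  show IsGreatest (lmCandidates A' B Φ y) (Φ y)
  rw [hset, ← hΨ hy]
  exact h y hy

theorem diff_singleton (h : IsLMset A B Ψ) (hpA : p ∈ A) (hpB : p ∈ B) :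
    IsLMset (A \ {p}) (B \ {p}) Ψ := by
  intro y hy
  show IsGreatest (lmCandidates _ _ Ψ y) (Ψ y)
  rw [lmCandidates_diff_singleton hpB (h.apply_eq_self hpA hpB) hy.2]
  exact h y hy.1

theorem of_diff_singleton (h : IsLMset (A \ {p}) (B \ {p}) Ψ) (hpA : p ∈ A) (hpB : p ∈ B)
    (hp : Ψ p = p) : IsLMset A B Ψ := by
  intro y hy
  show IsGreatest (lmCandidates A B Ψ y) (Ψ y)
  rcases eq_or_ne y p with rfl | hyp
  · rw [hp]
    refine ⟨⟨hpA, le_rfl, fun y' hy' hlt => ?_⟩, fun z hz => hz.2.1⟩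
    have := h.apply_le ⟨hy', hlt.ne⟩
    omega
  · rw [← lmCandidates_diff_singleton hpB hp hyp]
    exact h y ⟨hy, hyp⟩

theorem of_image (f : ℤ ≃ ℤ) (hf : StrictMonoOn f (A ∪ B)) (h : IsLMset (f '' A) (f '' B) Ψ) :
    IsLMset A B (f.symm ∘ Ψ ∘ f) := by
  intro y hy
  have key : ∀ z ∈ A, f z ∈ lmCandidates (f '' A) (f '' B) Ψ (f y) ↔
      z ∈ lmCandidates A B (f.symm ∘ Ψ ∘ f) y := by
    intro z hz
    simp only [lmCandidates, Set.mem_ofPred_eq, Set.forall_mem_image, Function.comp_apply,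
      f.injective.mem_set_image, hz, true_and,
      hf.le_iff_le (Or.inl hz) (Or.inr hy), ne_eq, Equiv.symm_apply_eq]
    exact and_congr_right fun _ => forall₂_congr fun y' hy' => by
      rw [hf.lt_iff_lt (Or.inr hy') (Or.inr hy)]
  obtain ⟨hmem, hub⟩ := h (f y) (Set.mem_image_of_mem f hy)
  obtain ⟨z₀, hz₀A, hz₀⟩ := hmem.1
  have hval : (f.symm ∘ Ψ ∘ f) y = z₀ := by simp [← hz₀]
  rw [hval]
  refine ⟨(key z₀ hz₀A).1 (hz₀ ▸ hmem), fun z hz => ?_⟩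
  have := hub ((key z hz.1).2 hz)
  rwa [← hz₀, hf.le_iff_le (Or.inl hz.1) (Or.inl hz₀A)] at this

theorem of_image_swap (hA : x ∈ A) (hB : x ∈ B)
    (h : IsLMset (Equiv.swap x (x - 1) '' A) (Equiv.swap x (x - 1) '' B) Ψ) :
    IsLMset A B (Equiv.swap x (x - 1) ∘ Ψ ∘ Equiv.swap x (x - 1)) := by
  set σ := Equiv.swap x (x - 1)
  have hσx : σ x = x - 1 := Equiv.swap_apply_left _ _
  have hA' : x - 1 ∈ σ '' A := ⟨x, hA, hσx⟩
  have hB' : x - 1 ∈ σ '' B := ⟨x, hB, hσx⟩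
  have h₀ : IsLMset (σ '' (A \ {x})) (σ '' (B \ {x})) Ψ := by
    rw [Set.image_sdiff σ.injective, Set.image_sdiff σ.injective, Set.image_singleton, hσx]
    exact h.diff_singleton hA' hB'
  have h₁ := h₀.of_image σ (strictMonoOn_swap_sub_one (by simp))
  rw [Equiv.symm_swap] at h₁
  refine h₁.of_diff_singleton hA hB ?_
  simp only [Function.comp_apply, hσx, h.apply_eq_self hA' hB']
  exact Equiv.swap_apply_right _ _

theorem of_image_swap_of_le (hB : ∀ y ∈ B, y ≤ x - 2)
    (h : IsLMset (Equiv.swap x (x - 1) '' A) (Equiv.swap x (x - 1) '' B) Ψ) :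
    IsLMset A B (Equiv.swap x (x - 1) ∘ Ψ ∘ Equiv.swap x (x - 1)) := by
  have hfix : ∀ z ≤ x - 2, Equiv.swap x (x - 1) z = z := fun z hz =>
    Equiv.swap_apply_of_ne_of_ne (by omega) (by omega)
  rw [Equiv.swap_image_eq_self (S := B) (iff_of_false (fun hx => by have := hB x hx; omega)
    (fun hx => by have := hB _ hx; omega))] at h
  refine h.congr (fun y hy z hz => ?_) (fun y hy => ?_)
  · rw [Set.mem_image_equiv, Equiv.symm_swap, hfix z (hz.trans (hB y hy))]
  · have := h.apply_le hy
    simp only [Function.comp_apply, hfix y (hB y hy), hfix (Ψ y) (this.trans (hB y hy))]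

end IsLMset

open Classical in
-- The inner `if` only serves the termination argument.
noncomputable def lmGreedy (A B : Set ℤ) (m y : ℤ) : ℤ :=
  if y ≤ m then y else
    if h : ∃ g, IsGreatest {z | z ∈ A ∧ z ≤ y ∧ ∀ y' ∈ B, y' < y →
        (if m < y' then lmGreedy A B m y' else y') ≠ z} g then h.choose else y
termination_by (y - m).toNat

section Greedy

variable {A B : Set ℤ} {m y : ℤ}

theorem lmGreedy_of_le (hy : y ≤ m) : lmGreedy A B m y = y := by
  rw [lmGreedy, if_pos hy]

theorem lmGreedy_le : lmGreedy A B m y ≤ y := by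
  rw [lmGreedy]
  split_ifs with _ h
  exacts [le_rfl, h.choose_spec.1.2.1, le_rfl]

theorem isGreatest_lmGreedy (hy : m < y)
    (hex : ∃ g, IsGreatest (lmCandidates A B (lmGreedy A B m) y) g) :
    IsGreatest (lmCandidates A B (lmGreedy A B m) y) (lmGreedy A B m y) := by
  have hite : ∀ y', (if m < y' then lmGreedy A B m y' else y') = lmGreedy A B m y' := by
    intro y'
    split_ifs with h
    · rfl
    · exact (lmGreedy_of_le (not_lt.1 h)).symm
  have hset : {z | z ∈ A ∧ z ≤ y ∧ ∀ y' ∈ B, y' < y →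
      (if m < y' then lmGreedy A B m y' else y') ≠ z} = lmCandidates A B (lmGreedy A B m) y := by
    simp only [hite]
    rfl
  have hex' := hset ▸ hex
  rw [lmGreedy, if_neg (not_le.2 hy), dif_pos hex']
  exact hset ▸ hex'.choose_spec

end Greedy

theorem exists_isLMset {A B : Set ℤ} (m : ℤ) (hlow : ∀ y ∈ B, y ≤ m → y ∈ A)
    (hcard : ∀ y ∈ B, m < y → (B ∩ Set.Ioo m y).ncard < (A ∩ Set.Ioc m y).ncard) :
    ∃ Ψ, IsLMset A B Ψ := by
  refine ⟨lmGreedy A B m, fun y hy => ?_⟩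
  by_cases hym : y ≤ m
  · rw [lmGreedy_of_le hym]
    exact ⟨⟨hlow y hy hym, le_rfl, fun y' _ hlt => (lmGreedy_le.trans_lt hlt).ne⟩,
      fun z hz => hz.2.1⟩
  rw [not_le] at hym
  refine isGreatest_lmGreedy hym ?_
  have hfin := (Set.finite_Ioo m y).inter_of_right B
  obtain ⟨z, ⟨hzA, hmz, hzy⟩, hfree⟩ := Set.not_subset.1
    fun (hsub : A ∩ Set.Ioc m y ⊆ lmGreedy A B m '' (B ∩ Set.Ioo m y)) =>
      (hcard y hy hym).not_ge <|
        (Set.ncard_le_ncard hsub (hfin.image _)).trans (Set.ncard_image_le hfin)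
  have hne : (lmCandidates A B (lmGreedy A B m) y).Nonempty := by
    refine ⟨z, hzA, hzy, fun y' hy' hlt heq => ?_⟩
    by_cases hy'm : y' ≤ m
    · rw [lmGreedy_of_le hy'm] at heq
      omega
    · exact hfree ⟨y', ⟨hy', not_le.1 hy'm, hlt⟩, heq⟩
  have hbdd : BddAbove (lmCandidates A B (lmGreedy A B m) y) := ⟨y, fun z hz => hz.2.1⟩
  exact ⟨_, Int.csSup_mem hne hbdd, fun z hz => le_csSup hbdd hz⟩

namespace RowOK

variable {s : ℤ} {β β' : ℤ → ℤ}

theorem strictMonoOn (h : RowOK s β) : StrictMonoOn β (Set.Iic s) :=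
  strictMonoOn_Iic_of_lt_succ fun m hm => by
    simpa [Order.succ_eq_add_one] using h.1 (m + 1) (by omega)

theorem le_apply (h : RowOK s β) {j : ℤ} (hj : j ≤ s) : j ≤ β j := by
  obtain ⟨N, hN⟩ := h.2
  have key : ∀ n, min N j ≤ n → n ≤ j → n ≤ β n := by
    intro n hn
    induction n, hn using Int.leInduction with
    | base => exact fun _ => (hN _ (min_le_left _ _)).ge
    | succ n hn ih =>
      intro hnj
      have := h.1 (n + 1) (by omega)
      rw [add_sub_cancel_right] at this
      have := ih (by omega)
      omega
  exact key j (min_le_right _ _) le_rfl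

theorem rowSize_eq_sum (h : RowOK s β) :
    ∀ᶠ K in Filter.atTop, rowSize s β = ∑ k ∈ Finset.range K, (β (s - k) - (s - k)).toNat := by
  obtain ⟨N, hN⟩ := h.2
  filter_upwards [Filter.eventually_ge_atTop (s - N).toNat] with K hK
  refine tsum_eq_sum fun k hk => ?_
  rw [Finset.mem_range, not_lt] at hk
  rw [hN _ (by omega), sub_self, Int.toNat_zero]

theorem rowSize_le_rowSize (h : RowOK s β) (h' : RowOK s β') (hle : ∀ j ≤ s, β' j ≤ β j) :
    rowSize s β' ≤ rowSize s β := by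
  obtain ⟨K, hK, hK'⟩ := (h.rowSize_eq_sum.and h'.rowSize_eq_sum).exists
  rw [hK, hK']
  refine Finset.sum_le_sum fun k _ => ?_
  have := hle (s - k) (by omega)
  omega

theorem rowSize_lt_rowSize (h : RowOK s β) (h' : RowOK s β') (hle : ∀ j ≤ s, β' j ≤ β j)
    {j : ℤ} (hj : j ≤ s) (hlt : β' j < β j) : rowSize s β' < rowSize s β := by
  obtain ⟨K, hK, hK', hKj⟩ := (h.rowSize_eq_sum.and
    (h'.rowSize_eq_sum.and (Filter.eventually_gt_atTop (s - j).toNat))).exists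
  rw [hK, hK']
  refine Finset.sum_lt_sum (fun k _ => ?_) ⟨(s - j).toNat, Finset.mem_range.2 hKj, ?_⟩
  · have := hle (s - k) (by omega)
    omega
  · have := h'.le_apply hj
    rw [show s - ((s - j).toNat : ℤ) = j by omega]
    omega

end RowOK

section Symbol

variable {l : ℕ} {v : ℕ → ℤ} {β : ℕ → ℤ → ℤ}

theorem charge_le_charge (hv : ∀ i, 1 ≤ i → i < l → v (i + 1) ≤ v i) {a b : ℕ} (ha : 1 ≤ a)
    (hab : a ≤ b) (hbl : b ≤ l) : v b ≤ v a := by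
  induction b, hab using Nat.le_induction with
  | base => exact le_rfl
  | succ n hn ih => exact (hv n (by omega) (by omega)).trans (ih (by omega))

theorem Standard.apply_le_apply (hstd : Standard l v β) (hv : ∀ i, 1 ≤ i → i < l → v (i + 1) ≤ v i)
    {a b : ℕ} (ha : 1 ≤ a) (hab : a ≤ b) (hbl : b ≤ l) {j : ℤ} (hj : j ≤ v b) :
    β a j ≤ β b j := by
  induction b, hab using Nat.le_induction with
  | base => exact le_rfl
  | succ n hn ih =>
    have hvn := hv n (by omega) (by omega)
    exact (ih (by omega) (hj.trans hvn)).trans (hstd n (by omega) (by omega) j hj)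

theorem exists_isLMset_row (hv : ∀ i, 1 ≤ i → i < l → v (i + 1) ≤ v i)
    (hrows : ∀ i, 1 ≤ i → i ≤ l → RowOK (v i) (β i)) (hstd : Standard l v β)
    {a b : ℕ} (ha : 1 ≤ a) (hab : a < b) (hbl : b ≤ l) :
    ∃ Ψ, IsLMset (Row v β a) (Row v β b) Ψ := by
  have hOKa := hrows a ha (by omega)
  have hOKb := hrows b (by omega) hbl
  have hvba : v b ≤ v a := charge_le_charge hv ha hab.le hbl
  obtain ⟨Na, hNa⟩ := hOKa.2
  obtain ⟨Nb, hNb⟩ := hOKb.2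
  -- below `m` both rows consist of all integers
  set m := min (min Na Nb) (v b)
  refine exists_isLMset m (fun y _ hym => ⟨y, by omega, hNa y (by omega)⟩) ?_
  rintro y ⟨j, hjv, rfl⟩ hmy
  have hmj : m < j := by
    by_contra! hjm
    rw [hNb j (by omega)] at hmy
    omega
  calc (Row v β b ∩ Set.Ioo m (β b j)).ncard
      ≤ (β b '' Set.Ioo m j).ncard := by
        refine Set.ncard_le_ncard ?_ ((Set.finite_Ioo m j).image _)
        rintro _ ⟨⟨j', hj'v, rfl⟩, hmy', hlt⟩
        refine ⟨j', ⟨?_, (hOKb.strictMonoOn.lt_iff_lt hj'v hjv).1 hlt⟩, rfl⟩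
        by_contra! hj'm
        rw [hNb j' (by omega)] at hmy'
        omega
    _ ≤ (Set.Ioo m j).ncard := Set.ncard_image_le (Set.finite_Ioo m j)
    _ < (Set.Ioc m j).ncard := by
        simp only [← Finset.coe_Ioo, ← Finset.coe_Ioc, Set.ncard_coe_finset, Int.card_Ioo,
          Int.card_Ioc]
        omega
    _ = (β a '' Set.Ioc m j).ncard :=
        ((hOKa.strictMonoOn.injOn).mono fun j' hj' => by
          simp only [Set.mem_Iic]; have := hj'.2; omega).ncard_image.symm
    _ ≤ (Row v β a ∩ Set.Ioc m (β b j)).ncard := by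
        refine Set.ncard_le_ncard ?_ (Set.finite_Ioc m _ |>.inter_of_right _)
        rintro _ ⟨j', ⟨hmj', hj'j⟩, rfl⟩
        have hmono : β a j' ≤ β a j :=
          (hOKa.strictMonoOn.le_iff_le (by simp only [Set.mem_Iic]; omega)
            (by simp only [Set.mem_Iic]; omega)).2 hj'j
        refine ⟨⟨j', by omega, rfl⟩, ?_, ?_⟩
        · have := hOKa.le_apply (j := j') (by omega)
          omega
        · exact hmono.trans (hstd.apply_le_apply hv ha hab.le hbl hjv)

theorem sub_one_mem_row_succ (hv : ∀ i, 1 ≤ i → i < l → v (i + 1) ≤ v i)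
    (hrows : ∀ i, 1 ≤ i → i ≤ l → RowOK (v i) (β i)) (hstd : Standard l v β)
    {a : ℕ} (ha : 1 ≤ a) (hal : a < l) {j x : ℤ} (hj : j ≤ v (a + 1)) (hxa : β a j = x)
    (hxa1 : β (a + 1) j = x) (hx1 : x - 1 ∈ Row v β a) : x - 1 ∈ Row v β (a + 1) := by
  obtain ⟨j', hj'v, hj'⟩ := hx1
  have hOKa := hrows a ha hal.le
  have hjva : j ≤ v a := hj.trans (hv a ha hal)
  have hj'j : j' ≤ j - 1 := by
    have := (hOKa.strictMonoOn.lt_iff_lt hj'v hjva).1 (by omega)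
    omega
  have h₁ : β a j' ≤ β a (j - 1) :=
    (hOKa.strictMonoOn.le_iff_le hj'v (by simp only [Set.mem_Iic]; omega)).2 hj'j
  have h₂ := hstd a ha hal (j - 1) (by omega)
  have h₃ := (hrows (a + 1) (by omega) hal).1 j hj
  exact ⟨j - 1, by omega, by omega⟩

theorem row_eq_Iic_of_lt {c : ℕ} (hbelow : ∀ i, c < i → i ≤ l → ∀ j : ℤ, j ≤ v i → β i j = j)
    {a : ℕ} (hca : c < a) (hal : a ≤ l) : Row v β a = Set.Iic (v a) := by
  ext z
  exact ⟨fun ⟨j, hj, hjz⟩ => hjz ▸ (hbelow a hca hal j hj).symm ▸ hj,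
    fun hz => ⟨z, hz, hbelow a hca hal z hz⟩⟩

theorem mem_row_of_lt (hv : ∀ i, 1 ≤ i → i < l → v (i + 1) ≤ v i)
    (hrows : ∀ i, 1 ≤ i → i ≤ l → RowOK (v i) (β i)) (hstd : Standard l v β)
    {c : ℕ} (hc1 : 1 ≤ c) (hbelow : ∀ i, c < i → i ≤ l → ∀ j : ℤ, j ≤ v i → β i j = j)
    {a : ℕ} (hca : c < a) (hal : a ≤ l) {z : ℤ} (hz : z ∈ Row v β a) : z ∈ Row v β c := by
  rw [row_eq_Iic_of_lt hbelow hca hal, Set.mem_Iic] at hz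
  have hzv : z ≤ v (c + 1) := hz.trans (charge_le_charge hv (by omega) hca hal)
  have h₁ := hstd c hc1 (by omega) z hzv
  have h₂ := hbelow (c + 1) (by omega) (by omega) z hzv
  have hzc : z ≤ v c := hzv.trans (hv c hc1 (by omega))
  have h₃ := (hrows c hc1 (by omega)).le_apply hzc
  exact ⟨z, hzc, by omega⟩

theorem lt_of_mem_row_of_notMem (hv : ∀ i, 1 ≤ i → i < l → v (i + 1) ≤ v i)
    (hrows : ∀ i, 1 ≤ i → i ≤ l → RowOK (v i) (β i)) (hstd : Standard l v β)
    {c : ℕ} (hc1 : 1 ≤ c) (hbelow : ∀ i, c < i → i ≤ l → ∀ j : ℤ, j ≤ v i → β i j = j)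
    {a : ℕ} (hal : a ≤ l) {z : ℤ} (hz : z ∈ Row v β a) (hzc : z ∉ Row v β c) : a < c := by
  rcases lt_trichotomy a c with hac | rfl | hca
  · exact hac
  · exact absurd hz hzc
  · exact absurd (mem_row_of_lt hv hrows hstd hc1 hbelow hca hal hz) hzc

theorem le_sub_two_of_lt {c : ℕ} (hbelow : ∀ i, c < i → i ≤ l → ∀ j : ℤ, j ≤ v i → β i j = j)
    {a : ℕ} (hca : c < a) (hal : a ≤ l) {x : ℤ} (hx1 : x - 1 ∉ Row v β a) :
    ∀ y ∈ Row v β a, y ≤ x - 2 := by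
  rw [row_eq_Iic_of_lt hbelow hca hal] at hx1 ⊢
  intro y hy
  rw [Set.mem_Iic] at hx1 hy
  omega

end Symbol

section Heart

variable {l : ℕ} {v : ℕ → ℤ} {β : ℕ → ℤ → ℤ}

theorem mem_row_of_mem_of_mem (hheart : Heart l v β)
    (hex : ∀ a b, 1 ≤ a → a < b → b ≤ l → ∃ Ψ, IsLMset (Row v β a) (Row v β b) Ψ)
    {i k : ℕ} (hi : 1 ≤ i) (hkl : k ≤ l) {y : ℤ} (hyi : y ∈ Row v β i) (hyk : y ∈ Row v β k)
    {a : ℕ} (hia : i ≤ a) (hak : a ≤ k) : y ∈ Row v β a := by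
  rcases hia.eq_or_lt with rfl | hia
  · exact hyi
  rcases hak.eq_or_lt with rfl | hak
  · exact hyk
  obtain ⟨ψki, hki⟩ := hex i k hi (by omega) hkl
  obtain ⟨ψai, hai⟩ := hex i a hi hia (by omega)
  obtain ⟨ψka, hka⟩ := hex a k (by omega) hak hkl
  have hcomp := hheart i a k hi hia hak hkl ψki ψai ψka hki hai hka y hyk
  rw [hki.apply_eq_self hyi hyk] at hcomp
  have h₁ := hka.apply_le hyk
  have h₂ := hai.apply_le (hka.apply_mem hyk)
  have hfix : ψka y = y := by omega
  exact hfix ▸ hka.apply_mem hyk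

theorem mem_row_of_lt_of_sub_one_notMem (hheart : Heart l v β)
    (hex : ∀ a b, 1 ≤ a → a < b → b ≤ l → ∃ Ψ, IsLMset (Row v β a) (Row v β b) Ψ)
    {a e c : ℕ} (ha : 1 ≤ a) (hae : a < e) (hec : e < c) (hcl : c ≤ l) {x : ℤ}
    (hxe : x ∈ Row v β e) (hx1e : x - 1 ∈ Row v β e) (hxc : x ∈ Row v β c)
    (hx1c : x - 1 ∉ Row v β c) : x ∈ Row v β a := by
  by_contra hxa
  obtain ⟨ψca, hca⟩ := hex a c ha (by omega) hcl
  obtain ⟨ψea, hea⟩ := hex a e ha hae (by omega)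
  obtain ⟨ψce, hce⟩ := hex e c (by omega) hec hcl
  have hcomp : ∀ y ∈ Row v β c, ψca y = ψea (ψce y) :=
    hheart a e c ha hae hec hcl ψca ψea ψce hca hea hce
  have hψx : ψea x ≤ x - 1 := by
    have := hea.apply_le hxe
    have : ψea x ≠ x := fun h => hxa (h ▸ hea.apply_mem hxe)
    omega
  have hlt : ψea x < ψea (x - 1) := hea.apply_lt_apply hx1e hxe (by omega) hψx
  have hle : ψea (x - 1) ≤ ψca x := by
    refine (hca x hxc).2 ⟨hea.apply_mem hx1e, (hea.apply_le hx1e).trans (by omega),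
      fun y' hy' hlt' heq => ?_⟩
    rw [hcomp y' hy'] at heq
    have h₁ := hea.injOn (hce.apply_mem hy') hx1e heq
    have h₂ := hce.apply_le hy'
    have h₃ : y' ≠ x - 1 := fun h => hx1c (h ▸ hy')
    omega
  rw [hcomp x hxc, hce.apply_eq_self hxe hxc] at hle
  omega

theorem mem_row_of_le (hheart : Heart l v β)
    (hex : ∀ a b, 1 ≤ a → a < b → b ≤ l → ∃ Ψ, IsLMset (Row v β a) (Row v β b) Ψ)
    {e c : ℕ} (he : 1 ≤ e) (hec : e < c) (hcl : c ≤ l) {x : ℤ}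
    (hxe : x ∈ Row v β e) (hx1e : x - 1 ∈ Row v β e) (hxc : x ∈ Row v β c)
    (hx1c : x - 1 ∉ Row v β c) {a : ℕ} (ha : 1 ≤ a) (hac : a ≤ c) : x ∈ Row v β a := by
  rcases lt_or_ge a e with hae | hea
  · exact mem_row_of_lt_of_sub_one_notMem hheart hex ha hae hec hcl hxe hx1e hxc hx1c
  · exact mem_row_of_mem_of_mem hheart hex he hcl hxe hxc hea hac

theorem Heart.of_row_eq_image_swap {β' : ℕ → ℤ → ℤ} {x : ℤ} (hheart : Heart l v β)
    (hrow : ∀ a, 1 ≤ a → a ≤ l → Row v β' a = Equiv.swap x (x - 1) '' Row v β a)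
    (hpair : ∀ a b, 1 ≤ a → a < b → b ≤ l →
      (x ∈ Row v β a ∧ x ∈ Row v β b) ∨ ∀ y ∈ Row v β b, y ≤ x - 2) :
    Heart l v β' := by
  set σ := Equiv.swap x (x - 1)
  have htransfer : ∀ a b, 1 ≤ a → a < b → b ≤ l → ∀ ψ, IsLMset (Row v β' a) (Row v β' b) ψ →
      IsLMset (Row v β a) (Row v β b) (σ ∘ ψ ∘ σ) := by
    intro a b ha hab hbl ψ hψ
    rw [hrow a ha (by omega), hrow b (by omega) hbl] at hψ
    rcases hpair a b ha hab hbl with ⟨hxa, hxb⟩ | hb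
    · exact hψ.of_image_swap hxa hxb
    · exact hψ.of_image_swap_of_le hb
  intro i j k hi hij hjk hkl ψki ψji ψkj hki hji hkj y hy
  rw [hrow k (by omega) hkl, Set.mem_image_equiv, Equiv.symm_swap] at hy
  have := hheart i j k hi hij hjk hkl _ _ _ (htransfer i k hi (by omega) hkl ψki hki)
    (htransfer i j hi hij (by omega) ψji hji) (htransfer j k (by omega) hjk hkl ψkj hkj) (σ y) hy
  simpa [σ] using this

end Heart

def lowerEntries (P : ℕ → Prop) [DecidablePred P] (x : ℤ) (β : ℕ → ℤ → ℤ) (i : ℕ) (j : ℤ) : ℤ :=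
  if P i ∧ β i j = x then x - 1 else β i j

section Lower

variable {l : ℕ} {v : ℕ → ℤ} {β : ℕ → ℤ → ℤ} {P : ℕ → Prop} [DecidablePred P] {x : ℤ}

theorem lowerEntries_le (i : ℕ) (j : ℤ) : lowerEntries P x β i j ≤ β i j := by
  unfold lowerEntries
  split_ifs <;> omega

theorem lowerEntries_of_not {i : ℕ} (hi : ¬ P i) : lowerEntries P x β i = β i := by
  funext j
  simp [lowerEntries, hi]

theorem rowOK_lowerEntries {i : ℕ} (h : RowOK (v i) (β i)) (hP : P i → x - 1 ∉ Row v β i) :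
    RowOK (v i) (lowerEntries P x β i) := by
  by_cases hi : P i
  · have hx : ∀ j ≤ v i, β i j ≠ x - 1 := fun j hj hjx => hP hi ⟨j, hj, hjx⟩
    refine ⟨fun j hj => ?_, ?_⟩
    · have := h.1 j hj
      have := hx (j - 1) (by omega)
      simp only [lowerEntries, hi, true_and]
      split_ifs <;> omega
    · obtain ⟨N, hN⟩ := h.2
      refine ⟨min N (x - 1), fun j hj => ?_⟩
      simp only [lowerEntries, hN j (by omega)]
      rw [if_neg (by omega)]
  · rwa [lowerEntries_of_not hi]

theorem row_lowerEntries {i : ℕ} (hP : P i → x - 1 ∉ Row v β i)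
    (hnP : ¬ P i → (x ∈ Row v β i ↔ x - 1 ∈ Row v β i)) :
    Row v (lowerEntries P x β) i = Equiv.swap x (x - 1) '' Row v β i := by
  by_cases hi : P i
  · change lowerEntries P x β i '' Set.Iic (v i) = _ '' (β i '' Set.Iic (v i))
    rw [Set.image_image]
    refine Set.image_congr fun j hj => ?_
    have hne : β i j ≠ x - 1 := fun hjx => hP hi ⟨j, hj, hjx⟩
    simp only [lowerEntries, hi, true_and, Equiv.swap_apply_def]
    split_ifs <;> omega
  · change lowerEntries P x β i '' Set.Iic (v i) = _
    rw [lowerEntries_of_not hi, Equiv.swap_image_eq_self (hnP hi)]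
    rfl

theorem symSize_lowerEntries_lt (hrows : ∀ i, 1 ≤ i → i ≤ l → RowOK (v i) (β i))
    (hP : ∀ i, P i → x - 1 ∉ Row v β i) {c : ℕ} (hc1 : 1 ≤ c) (hcl : c ≤ l) (hPc : P c)
    (hxc : x ∈ Row v β c) : symSize l v (lowerEntries P x β) < symSize l v β := by
  have hOK : ∀ i, 1 ≤ i → i ≤ l → RowOK (v i) (lowerEntries P x β i) :=
    fun i hi hil => rowOK_lowerEntries (hrows i hi hil) (hP i)
  obtain ⟨j, hj, hjx⟩ := hxc
  refine Finset.sum_lt_sum (fun i hi => ?_) ⟨c, Finset.mem_Icc.2 ⟨hc1, hcl⟩, ?_⟩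
  · rw [Finset.mem_Icc] at hi
    exact (hrows i hi.1 hi.2).rowSize_le_rowSize (hOK i hi.1 hi.2)
      fun j _ => lowerEntries_le i j
  · refine (hrows c hc1 hcl).rowSize_lt_rowSize (hOK c hc1 hcl)
      (fun j _ => lowerEntries_le c j) hj ?_
    simp only [lowerEntries, hPc, hjx, and_self, if_true]
    omega

theorem standard_lowerEntries (hv : ∀ i, 1 ≤ i → i < l → v (i + 1) ≤ v i)
    (hrows : ∀ i, 1 ≤ i → i ≤ l → RowOK (v i) (β i)) (hstd : Standard l v β)
    (hP : ∀ a, 1 ≤ a → a < l → P (a + 1) → ¬ P a →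
      x - 1 ∈ Row v β a ∧ x - 1 ∉ Row v β (a + 1)) :
    Standard l v (lowerEntries P x β) := by
  intro a ha hal j hj
  have hstdj := hstd a ha hal j hj
  have hlow := lowerEntries_le (P := P) (x := x) (β := β) a j
  by_cases hlow1 : P (a + 1) ∧ β (a + 1) j = x
  · simp only [lowerEntries, hlow1, and_self, if_true]
    by_cases hPa : P a
    · simp only [hPa, true_and]
      split_ifs <;> omega
    · obtain ⟨hx1a, hx1a1⟩ := hP a ha hal hlow1.1 hPa
      have : β a j ≠ x := fun hxa =>
        hx1a1 (sub_one_mem_row_succ hv hrows hstd ha hal hj hxa hlow1.2 hx1a)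
      omega
  · simp only [lowerEntries, hlow1, if_false] at hlow ⊢
    omega

end Lower

theorem heart_preserved_replacement_general
    (l : ℕ) (v : ℕ → ℤ)
    (hv : ∀ i, 1 ≤ i → i < l → v (i + 1) ≤ v i)
    (β : ℕ → ℤ → ℤ) (hrows : ∀ i, 1 ≤ i → i ≤ l → RowOK (v i) (β i))
    (hstd : Standard l v β) (hheart : Heart l v β)
    (c : ℕ) (hc1 : 1 ≤ c) (hcl : c ≤ l)
    (hbelow : ∀ i, c < i → i ≤ l → ∀ j : ℤ, j ≤ v i → β i j = j)
    (x : ℤ) (hxc : x ∈ Row v β c) (hx1c : (x - 1) ∉ Row v β c)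
    (hboth : ∃ i, 1 ≤ i ∧ i ≤ l ∧ x ∈ Row v β i ∧ (x - 1) ∈ Row v β i)
    (d : ℕ) (hd : 1 ≤ d ∧ d ≤ l ∧ (x - 1) ∈ Row v β d ∧
      ∀ i, d < i → i ≤ l → (x - 1) ∉ Row v β i)
    (d' : ℕ) (hd' : 1 ≤ d' ∧ d' ≤ l ∧ (x - 1) ∈ Row v β d' ∧
      ∀ i, 1 ≤ i → i < d' → (x - 1) ∉ Row v β i)
    (β' : ℕ → ℤ → ℤ)
    (hβ' : β' = fun i j =>
      if ((1 ≤ i ∧ i < d') ∨ (d < i ∧ i ≤ c)) ∧ β i j = x then x - 1 else β i j) :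
    (∀ i, 1 ≤ i → i ≤ l → RowOK (v i) (β' i)) ∧ Standard l v β' ∧ Heart l v β' ∧
      symSize l v β' < symSize l v β := by
  obtain ⟨-, hdl, hx1d, hd4⟩ := hd
  obtain ⟨hd'1, hd'l, hx1d', hd'4⟩ := hd'
  obtain ⟨e, he1, hel, hxe, hx1e⟩ := hboth
  have hex := fun a b => exists_isLMset_row hv hrows hstd (a := a) (b := b)
  have hed : e ≤ d := not_lt.1 fun h => hd4 e h hel hx1e
  have hd'd : d' ≤ d := not_lt.1 fun h => hd4 d' h hd'l hx1d'
  have hdc : d < c := lt_of_mem_row_of_notMem hv hrows hstd hc1 hbelow hdl hx1d hx1c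
  have hx : ∀ a, 1 ≤ a → a ≤ c → x ∈ Row v β a := fun a =>
    mem_row_of_le hheart hex he1 (by omega) hcl hxe hx1e hxc hx1c
  have hx1 : ∀ a, d' ≤ a → a ≤ d → x - 1 ∈ Row v β a := fun a =>
    mem_row_of_mem_of_mem hheart hex hd'1 hdl hx1d' hx1d
  have hlow : ∀ a, c < a → a ≤ l → ∀ y ∈ Row v β a, y ≤ x - 2 := fun a hca hal =>
    le_sub_two_of_lt hbelow hca hal (hd4 a (by omega) hal)
  have hP : ∀ i, (1 ≤ i ∧ i < d') ∨ (d < i ∧ i ≤ c) → x - 1 ∉ Row v β i := by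
    rintro i (⟨h1, h2⟩ | ⟨h1, h2⟩)
    exacts [hd'4 i h1 h2, hd4 i h1 (by omega)]
  rw [show β' = lowerEntries (fun i => (1 ≤ i ∧ i < d') ∨ (d < i ∧ i ≤ c)) x β from hβ']
  refine ⟨fun i hi hil => rowOK_lowerEntries (hrows i hi hil) (hP i),
    standard_lowerEntries hv hrows hstd fun a ha hal _ _ => ?_,
    hheart.of_row_eq_image_swap (fun a ha hal => row_lowerEntries (hP a) fun hPa => ?_)
      fun a b ha hab hbl => ?_,
    symSize_lowerEntries_lt hrows hP hc1 hcl (Or.inr ⟨hdc, le_rfl⟩) hxc⟩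
  · obtain rfl : a = d := by omega
    exact ⟨hx1d, hd4 (a + 1) (by omega) (by omega)⟩
  · by_cases hac : a ≤ c
    · exact iff_of_true (hx a ha hac) (hx1 a (by omega) (by omega))
    · have := hlow a (by omega) hal
      exact iff_of_false (fun h => by have := this x h; omega) fun h => by have := this _ h; omega
  · by_cases hbc : b ≤ c
    · exact Or.inl ⟨hx a ha (by omega), hx b (by omega) hbc⟩
    · exact Or.inr (hlow b (by omega) hbl)

/-- Replacing `x` by `x−1` in the rows `i` with `1 ≤ i < d'` or `d < i ≤ c` of a
standard (♥)-symbol (in the situation where some row contains both `x` and `x−1`)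
yields again a standard symbol satisfying (♥), of strictly smaller size. -/
theorem heart_preserved_replacement
    (l : ℕ) (hl : 1 ≤ l) (v : ℕ → ℤ)
    (hv : ∀ i, 1 ≤ i → i < l → v (i + 1) ≤ v i)
    (β : ℕ → ℤ → ℤ) (hrows : ∀ i, 1 ≤ i → i ≤ l → RowOK (v i) (β i))
    (hstd : Standard l v β) (hheart : Heart l v β)
    (c : ℕ) (hc1 : 1 ≤ c) (hcl : c ≤ l)
    (hbelow : ∀ i, c < i → i ≤ l → ∀ j : ℤ, j ≤ v i → β i j = j)
    (x : ℤ) (hxc : x ∈ Row v β c) (hx1c : (x - 1) ∉ Row v β c)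
    (hxmin : ∀ y : ℤ, y ∈ Row v β c → (y - 1) ∉ Row v β c → x ≤ y)
    (c' : ℕ) (hc' : 1 ≤ c' ∧ c' ≤ l ∧ x ∈ Row v β c' ∧
      ∀ i, 1 ≤ i → i < c' → x ∉ Row v β i)
    (hboth : ∃ i, 1 ≤ i ∧ i ≤ l ∧ x ∈ Row v β i ∧ (x - 1) ∈ Row v β i)
    (d : ℕ) (hd : 1 ≤ d ∧ d ≤ l ∧ (x - 1) ∈ Row v β d ∧
      ∀ i, d < i → i ≤ l → (x - 1) ∉ Row v β i)
    (d' : ℕ) (hd' : 1 ≤ d' ∧ d' ≤ l ∧ (x - 1) ∈ Row v β d' ∧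
      ∀ i, 1 ≤ i → i < d' → (x - 1) ∉ Row v β i)
    (β' : ℕ → ℤ → ℤ)
    (hβ' : β' = fun i j =>
      if ((1 ≤ i ∧ i < d') ∨ (d < i ∧ i ≤ c)) ∧ β i j = x then x - 1 else β i j) :
    (∀ i, 1 ≤ i → i ≤ l → RowOK (v i) (β' i)) ∧ Standard l v β' ∧ Heart l v β' ∧
      symSize l v β' < symSize l v β :=
  heart_preserved_replacement_general l v hv β hrows hstd hheart c hc1 hcl hbelow x hxc hx1c hboth d
    hd d' hd' β' hβ'
end

section
/- Suppose G(S') = Σ_{T'} α_{S',T'}(q) T' is the canonical basis expansion of a standard symbol S' in the Fock space, with α_{S',S'} = 1 and α_{S',T'} ∈ q ℤ[q] for T' ≠ S'. If every symbol T' appearing with nonzero coefficient contains the entry i exactly once in each of its l rows and contains no entry i+1, then F_i^{(l)} · G(S') = Σ_{T'} α_{S',T'}(q) T'' where T'' is obtained from T' by replacing i with i+1 in every row; moreover this equals G(S) for S obtained from S' by replacing i with i+1 in every row. -/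
open scoped Classical

/-- A symbol with rows given as sets of β-numbers (row `k` for `k = 1,…,l`). -/
abbrev Symb : Type := ℕ → Set ℤ

/-- An element of the FockSp space: a (formal) linear combination of symbols with
coefficients in `ℤ[q, q⁻¹]`. -/
abbrev FockSp : Type := Symb → LaurentPolynomial ℤ

/-- Revert the entries `i+1` of the rows in `A` back to `i`. -/
noncomputable def revert (i : ℤ) (A : Finset ℕ) (T : Symb) : Symb :=
  fun k => if k ∈ A then (T k \ {i + 1}) ∪ {i} else T k

/-- The exponent `N²(S, S'')` of Proposition 2.4, where `S = revert i A T` is the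
original symbol, `T = S''` the result, and `A` the set of rows changed:
`N² = Σ_{r ∈ A} (#{k > r : i ∈ S'' k} − #{k > r : i+1 ∈ S k})`. -/
noncomputable def N2 (l : ℕ) (i : ℤ) (A : Finset ℕ) (T : Symb) : ℤ :=
  ∑ r ∈ A,
    ((((Finset.Ioc r l).filter (fun k => i ∈ T k)).card : ℤ) -
      (((Finset.Ioc r l).filter (fun k => (i + 1) ∈ revert i A T k)).card : ℤ))

/-- The action of the divided power `F_i^{(a)}` on the FockSp space:
`F_i^{(a)}·S = Σ_{S''} q^{N²(S,S'')} S''`, the sum over the symbols `S''` obtained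
from `S` by replacing exactly `a` entries `i` with `i+1`. -/
noncomputable def Fdiv (l : ℕ) (i : ℤ) (a : ℕ) (f : FockSp) : FockSp :=
  fun T => ∑ A ∈ (Finset.Icc 1 l).powerset.filter (fun A => A.card = a),
    if ∀ k ∈ A, (i + 1) ∈ T k ∧ i ∉ T k then
      LaurentPolynomial.T (N2 l i A T) * f (revert i A T)
    else 0

/-- Replace the entry `i` by `i+1` in each of the rows `1,…,l`. -/
def shiftAll (l : ℕ) (i : ℤ) (T : Symb) : Symb :=
  fun k => if 1 ≤ k ∧ k ≤ l then (T k \ {i}) ∪ {i + 1} else T k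

/-- A Laurent polynomial lies in `q·ℤ[q]`. -/
def InQZq (z : LaurentPolynomial ℤ) : Prop :=
  ∃ p : Polynomial ℤ, z = LaurentPolynomial.T 1 * Polynomial.toLaurent p

-- aux lemmas
lemma pow_filter (l : ℕ) :
    (Finset.Icc 1 l).powerset.filter (fun A => A.card = l) = {Finset.Icc 1 l} := by
  ext A
  simp only [Finset.mem_filter, Finset.mem_powerset, Finset.mem_singleton]
  constructor
  · rintro ⟨h1, h2⟩
    exact Finset.eq_of_subset_of_card_le h1 (by simp [Nat.card_Icc, h2])
  · rintro rfl; simp [Nat.card_Icc]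

lemma Fdiv_eq (l : ℕ) (i : ℤ) (f : FockSp) (T : Symb) :
    Fdiv l i l f T =
      if ∀ k ∈ Finset.Icc 1 l, (i + 1) ∈ T k ∧ i ∉ T k then
        LaurentPolynomial.T (N2 l i (Finset.Icc 1 l) T) * f (revert i (Finset.Icc 1 l) T)
      else 0 := by
  unfold Fdiv
  rw [pow_filter, Finset.sum_singleton]

lemma cond_shiftAll (l : ℕ) (i : ℤ) (T : Symb) :
    ∀ k ∈ Finset.Icc 1 l, (i + 1) ∈ shiftAll l i T k ∧ i ∉ shiftAll l i T k := by
  intro k hk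
  rw [Finset.mem_Icc] at hk
  simp only [shiftAll, hk, and_self, if_true]
  constructor
  · right; rfl
  · rintro (⟨-, h⟩ | h)
    · exact h rfl
    · simp only [Set.mem_singleton_iff] at h
      omega

lemma revert_shiftAll (l : ℕ) (i : ℤ) (T : Symb)
    (h : ∀ k, 1 ≤ k → k ≤ l → i ∈ T k ∧ (i + 1) ∉ T k) :
    revert i (Finset.Icc 1 l) (shiftAll l i T) = T := by
  funext k
  by_cases hk : k ∈ Finset.Icc 1 l
  · rw [Finset.mem_Icc] at hk
    obtain ⟨hi, hi1⟩ := h k hk.1 hk.2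
    simp only [revert, shiftAll, Finset.mem_Icc, hk, and_self, if_true]
    ext x
    simp only [Set.mem_union, Set.mem_diff, Set.mem_singleton_iff]
    constructor
    · rintro (⟨(⟨hx, -⟩ | hx), hne⟩ | rfl)
      · exact hx
      · exact absurd hx hne
      · exact hi
    · intro hx
      by_cases hxi : x = i
      · right; exact hxi
      · left; exact ⟨Or.inl ⟨hx, hxi⟩, fun he => hi1 (he ▸ hx)⟩
  · simp only [revert, hk, if_neg, if_false]
    rw [Finset.mem_Icc] at hk
    simp [shiftAll, hk]

lemma shiftAll_revert (l : ℕ) (i : ℤ) (U : Symb)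
    (h : ∀ k ∈ Finset.Icc 1 l, (i + 1) ∈ U k ∧ i ∉ U k) :
    shiftAll l i (revert i (Finset.Icc 1 l) U) = U := by
  funext k
  by_cases hk : k ∈ Finset.Icc 1 l
  · obtain ⟨hi1, hi⟩ := h k hk
    rw [Finset.mem_Icc] at hk
    simp only [shiftAll, revert, Finset.mem_Icc, hk, and_self, if_true]
    ext x
    simp only [Set.mem_union, Set.mem_diff, Set.mem_singleton_iff]
    constructor
    · rintro (⟨(⟨hx, -⟩ | rfl), hxi⟩ | rfl)
      · exact hx
      · exact absurd rfl hxi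
      · exact hi1
    · intro hx
      by_cases hxi : x = i + 1
      · right; exact hxi
      · left; exact ⟨Or.inl ⟨hx, hxi⟩, fun he => hi (he ▸ hx)⟩
  · rw [Finset.mem_Icc] at hk
    simp [shiftAll, revert, Finset.mem_Icc, hk]

lemma N2_shiftAll (l : ℕ) (i : ℤ) (T : Symb)
    (h : ∀ k, 1 ≤ k → k ≤ l → i ∈ T k ∧ (i + 1) ∉ T k) :
    N2 l i (Finset.Icc 1 l) (shiftAll l i T) = 0 := by
  unfold N2
  rw [revert_shiftAll l i T h]
  apply Finset.sum_eq_zero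
  intro r hr
  rw [Finset.mem_Icc] at hr
  have h1 : (Finset.Ioc r l).filter (fun k => i ∈ shiftAll l i T k) = ∅ := by
    apply Finset.filter_eq_empty_iff.mpr
    intro k hk
    rw [Finset.mem_Ioc] at hk
    have hk1 : 1 ≤ k := by omega
    simp only [shiftAll, hk1, hk.2, and_self, if_true]
    rintro (⟨-, hx⟩ | hx)
    · exact hx rfl
    · simp only [Set.mem_singleton_iff] at hx
      omega
  have h2 : (Finset.Ioc r l).filter (fun k => (i + 1) ∈ T k) = ∅ := by
    apply Finset.filter_eq_empty_iff.mpr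
    intro k hk
    rw [Finset.mem_Ioc] at hk
    exact (h k (by omega) hk.2).2
  rw [h1, h2]
  simp


/-- Suppose `G' = Σ α_{T'} T'` is the canonical basis element `G(S')`, i.e. it is
bar-invariant, `α_{S'} = 1` and `α_{T'} ∈ qℤ[q]` for `T' ≠ S'`.  If every symbol in
the support of `G'` contains `i` (exactly once) in each of its `l` rows and no
entry `i+1`, then `F_i^{(l)}·G' = Σ α_{T'} T''`, where `T''` is obtained from `T'`
by replacing `i` with `i+1` in every row; moreover this element is bar-invariant
and congruent to `S = shiftAll S'` modulo `q`, i.e. it is the canonical basis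
element `G(S)`. -/
theorem Fdiv_canonical
    (l : ℕ) (hl : 1 ≤ l) (i : ℤ)
    (G' : FockSp) (hfin : {T | G' T ≠ 0}.Finite)
    (S' : Symb) (hS' : G' S' = 1)
    (hq : ∀ T : Symb, T ≠ S' → G' T ≠ 0 → InQZq (G' T))
    (hsupp : ∀ T : Symb, G' T ≠ 0 → ∀ k, 1 ≤ k → k ≤ l → i ∈ T k ∧ (i + 1) ∉ T k)
    (bar : FockSp → FockSp) (hbarG : bar G' = G')
    (hbarF : ∀ f : FockSp, bar (Fdiv l i l f) = Fdiv l i l (bar f)) :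
    (∀ T : Symb, G' T ≠ 0 → Fdiv l i l G' (shiftAll l i T) = G' T) ∧
    (∀ U : Symb, (∀ T : Symb, G' T ≠ 0 → U ≠ shiftAll l i T) → Fdiv l i l G' U = 0) ∧
    bar (Fdiv l i l G') = Fdiv l i l G' ∧
    Fdiv l i l G' (shiftAll l i S') = 1 ∧
    (∀ U : Symb, U ≠ shiftAll l i S' → Fdiv l i l G' U ≠ 0 → InQZq (Fdiv l i l G' U)) := by
  have key1 : ∀ T : Symb, G' T ≠ 0 → Fdiv l i l G' (shiftAll l i T) = G' T := by
    intro T hT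
    rw [Fdiv_eq, if_pos (cond_shiftAll l i T), N2_shiftAll l i T (hsupp T hT),
      revert_shiftAll l i T (hsupp T hT), LaurentPolynomial.T_zero, one_mul]
  have key2 : ∀ U : Symb, (∀ T : Symb, G' T ≠ 0 → U ≠ shiftAll l i T) →
      Fdiv l i l G' U = 0 := by
    intro U hU
    rw [Fdiv_eq]
    split_ifs with hc
    · rcases eq_or_ne (G' (revert i (Finset.Icc 1 l) U)) 0 with h0 | h0
      · rw [h0, mul_zero]
      · exact absurd (shiftAll_revert l i U hc).symm (hU _ h0)
    · rfl
  refine ⟨key1, key2, ?_, ?_, ?_⟩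
  · rw [hbarF, hbarG]
  · rw [key1 S' (by rw [hS']; exact one_ne_zero), hS']
  · intro U hU hne
    by_cases hex : ∃ T : Symb, G' T ≠ 0 ∧ U = shiftAll l i T
    · obtain ⟨T, hT, rfl⟩ := hex
      rw [key1 T hT]
      exact hq T (fun he => hU (by rw [he])) hT
    · exact absurd (key2 U (fun T hT he => hex ⟨T, hT, he⟩)) hne
end

section
/- Let S = (β^1,...,β^l) be an ordered symbol such that for every column, the bottom entry differs from the top entry of the next column. Then for all 1 ≤ i ≤ j ≤ l and all k ≤ v_j, the Leclerc–Miyachi injection satisfies ψ_{j,i}(β^j_k) = β^i_k, and consequently S satisfies condition (♥): ψ_{k,i} = ψ_{j,i} ∘ ψ_{k,j} for all i < j < k. -/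
/-! ### Auxiliary lemmas -/

/-- Monotonicity of a step-increasing integer sequence on `(-∞, s]`. -/
lemma lm_row_mono {s : ℤ} {β : ℤ → ℤ} (h : ∀ j : ℤ, j ≤ s → β (j - 1) < β j) :
    ∀ ⦃a b : ℤ⦄, a ≤ b → b ≤ s → β a ≤ β b := by
  have aux : ∀ n : ℕ, ∀ b : ℤ, b ≤ s → β (b - n) ≤ β b := by
    intro n
    induction n with
    | zero => intro b _; simp
    | succ m ih =>
        intro b hbs
        have h1 : β (b - (m + 1 : ℕ)) ≤ β (b - 1) := by
          have := ih (b - 1) (by omega)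
          have heq : b - ((m : ℤ) + 1) = b - 1 - (m : ℤ) := by ring
          push_cast
          rw [heq]
          exact this
        exact le_trans h1 (le_of_lt (h b hbs))
  intro a b hab hbs
  have := aux (b - a).toNat b hbs
  rw [Int.toNat_of_nonneg (by omega)] at this
  simpa using this

/-- Strict monotonicity of a step-increasing integer sequence on `(-∞, s]`. -/
lemma lm_row_strict {s : ℤ} {β : ℤ → ℤ} (h : ∀ j : ℤ, j ≤ s → β (j - 1) < β j) :
    ∀ ⦃a b : ℤ⦄, a < b → b ≤ s → β a < β b := by
  intro a b hab hbs
  have h1 : β a ≤ β (b - 1) := lm_row_mono h (by omega) (by omega)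
  exact lt_of_le_of_lt h1 (h b hbs)

/-- The charges of a symbol are nonincreasing. -/
lemma lm_v_mono {l : ℕ} {v : ℕ → ℤ} (hv : ∀ i, 1 ≤ i → i < l → v (i + 1) ≤ v i) :
    ∀ ⦃a b : ℕ⦄, 1 ≤ a → a ≤ b → b ≤ l → v b ≤ v a := by
  intro a b h1a hab hbl
  induction b, hab using Nat.le_induction with
  | base => exact le_refl _
  | succ n hn ih =>
      exact le_trans (hv n (by omega) (by omega)) (ih (by omega))

/-- In a standard symbol, entries increase down each column. -/
lemma lm_std_chain {l : ℕ} {v : ℕ → ℤ} {β : ℕ → ℤ → ℤ}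
    (hv : ∀ i, 1 ≤ i → i < l → v (i + 1) ≤ v i) (hstd : Standard l v β) :
    ∀ ⦃i j : ℕ⦄, 1 ≤ i → i ≤ j → j ≤ l → ∀ ⦃k : ℤ⦄, k ≤ v j → β i k ≤ β j k := by
  intro i j h1i hij hjl k hk
  induction j, hij using Nat.le_induction with
  | base => exact le_refl _
  | succ n hn ih =>
      have hkn : k ≤ v n := le_trans hk (hv n (by omega) (by omega))
      exact le_trans (ih (by omega) hkn) (hstd n (by omega) (by omega) k hk)

/-- Rows with an entry in column `k` lie above row `colHeight l v k`. -/
lemma lm_le_colHeight {l : ℕ} {v : ℕ → ℤ} (hv : ∀ i, 1 ≤ i → i < l → v (i + 1) ≤ v i)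
    {j : ℕ} (h1j : 1 ≤ j) (hjl : j ≤ l) {k : ℤ} (hk : k ≤ v j) :
    j ≤ colHeight l v k := by
  have hsub : Finset.Icc 1 j ⊆ (Finset.Icc 1 l).filter (fun c => k ≤ v c) := by
    intro c hc
    simp only [Finset.mem_Icc] at hc
    simp only [Finset.mem_filter, Finset.mem_Icc]
    exact ⟨⟨hc.1, le_trans hc.2 hjl⟩, le_trans hk (lm_v_mono hv hc.1 hc.2 hjl)⟩
  have := Finset.card_le_card hsub
  simpa [colHeight] using this

lemma lm_colHeight_le {l : ℕ} {v : ℕ → ℤ} (k : ℤ) : colHeight l v k ≤ l := by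
  have := Finset.card_le_card (Finset.filter_subset (fun c => k ≤ v c) (Finset.Icc 1 l))
  simpa [colHeight] using this

/-- The bottom row of column `k` has an entry in column `k`. -/
lemma lm_k_le_v_colHeight {l : ℕ} {v : ℕ → ℤ} (hv : ∀ i, 1 ≤ i → i < l → v (i + 1) ≤ v i)
    {k : ℤ} (h1 : 1 ≤ colHeight l v k) : k ≤ v (colHeight l v k) := by
  by_contra hcon
  push_neg at hcon
  set h := colHeight l v k with hdef
  have hsub : (Finset.Icc 1 l).filter (fun c => k ≤ v c) ⊆ Finset.Icc 1 (h - 1) := by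
    intro c hc
    simp only [Finset.mem_filter, Finset.mem_Icc] at hc
    simp only [Finset.mem_Icc]
    refine ⟨hc.1.1, ?_⟩
    by_contra hch
    push_neg at hch
    have : h ≤ c := by omega
    have hle : v c ≤ v h := lm_v_mono hv h1 this hc.1.2
    omega
  have := Finset.card_le_card hsub
  simp only [Nat.card_Icc] at this
  have : h ≤ h - 1 + 1 - 1 := by simpa [hdef, colHeight] using this
  omega

/-- For an ordered symbol in which the bottom entry of each column differs from the
top entry of the next column, the Leclerc–Miyachi injections are given by
`ψ_{j,i}(β^j_k) = β^i_k`; consequently the symbol satisfies condition (♥). -/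
theorem ordered_satisfies_heart
    (l : ℕ) (hl : 1 ≤ l) (v : ℕ → ℤ)
    (hv : ∀ i, 1 ≤ i → i < l → v (i + 1) ≤ v i)
    (β : ℕ → ℤ → ℤ) (hrows : ∀ i, 1 ≤ i → i ≤ l → RowOK (v i) (β i))
    (hord : Ordered l v β)
    (hjunction : ∀ j : ℤ, j < v 1 → β (colHeight l v j) j ≠ β 1 (j + 1)) :
    (∀ i j, 1 ≤ i → i ≤ j → j ≤ l →
      ∀ ψ : ℤ → ℤ, IsLMset (Row v β i) (Row v β j) ψ →
        ∀ k : ℤ, k ≤ v j → ψ (β j k) = β i k) ∧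
    Heart l v β := by
  have main : ∀ i j, 1 ≤ i → i ≤ j → j ≤ l →
      ∀ ψ : ℤ → ℤ, IsLMset (Row v β i) (Row v β j) ψ →
        ∀ k : ℤ, k ≤ v j → ψ (β j k) = β i k := by
    intro i j h1i hij hjl ψ hψ
    have h1j : 1 ≤ j := le_trans h1i hij
    have hil : i ≤ l := le_trans hij hjl
    obtain ⟨hinc_i, Ni, hNi⟩ := hrows i h1i hil
    obtain ⟨hinc_j, Nj, hNj⟩ := hrows j h1j hjl
    have hvij : v j ≤ v i := lm_v_mono hv h1i hij hjl
    have hv1i : v i ≤ v 1 := lm_v_mono hv le_rfl h1i hil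
    set N : ℤ := min (min Ni Nj) (min (v i) (v j)) with hNdef
    -- key induction
    have key : ∀ n : ℕ, ∀ k : ℤ, k ≤ v j → k ≤ N + n → ψ (β j k) = β i k := by
      intro n
      induction n with
      | zero =>
          intro k hkvj hkN
          have hkN' : k ≤ N := by simpa using hkN
          have hbj : β j k = k := hNj k (by omega)
          have hbi : β i k = k := hNi k (by omega)
          have hkB2 : β j k ∈ Row v β j := ⟨k, hkvj, rfl⟩
          have hG := hψ (β j k) hkB2
          have hmem : β j k ∈ {z | z ∈ Row v β i ∧ z ≤ β j k ∧
              ∀ y' ∈ Row v β j, y' < β j k → ψ y' ≠ z} := by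
            refine ⟨⟨k, by omega, by rw [hbi, hbj]⟩, le_refl _, ?_⟩
            intro y' hy' hlt
            have := (hψ y' hy').1.2.1
            omega
          have h1 : β j k ≤ ψ (β j k) := hG.2 hmem
          have h2 : ψ (β j k) ≤ β j k := hG.1.2.1
          omega
      | succ n ih =>
          intro k hkvj hkN
          by_cases hcase : k ≤ N + n
          · exact ih k hkvj hcase
          have hkval : k = N + n + 1 := by push_cast at hkN ⊢; omega
          have IH : ∀ m : ℤ, m ≤ v j → m < k → ψ (β j m) = β i m := by
            intro m hm hmk
            exact ih m hm (by omega)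
          have hkvi : k ≤ v i := le_trans hkvj hvij
          have hkB2 : β j k ∈ Row v β j := ⟨k, hkvj, rfl⟩
          have hG := hψ (β j k) hkB2
          -- β i k is a candidate
          have hmem : β i k ∈ {z | z ∈ Row v β i ∧ z ≤ β j k ∧
              ∀ y' ∈ Row v β j, y' < β j k → ψ y' ≠ z} := by
            refine ⟨⟨k, hkvi, rfl⟩, lm_std_chain hv hord.1 h1i hij hjl hkvj, ?_⟩
            intro y' hy' hlt
            obtain ⟨m, hm, rfl⟩ := hy'
            have hmk : m < k := by
              by_contra hcon
              push_neg at hcon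
              have : β j k ≤ β j m := lm_row_mono hinc_j hcon hm
              omega
            rw [IH m hm hmk]
            have : β i m < β i k := lm_row_strict hinc_i hmk hkvi
            omega
          have hlow : β i k ≤ ψ (β j k) := hG.2 hmem
          -- ψ (β j k) ≤ β i k
          obtain ⟨m, hmvi, hmeq⟩ := hG.1.1
          have hup : ψ (β j k) ≤ β j k := hG.1.2.1
          have hmk : m ≤ k := by
            by_contra hcon
            push_neg at hcon
            -- m > k, derive contradiction
            have hk1v1 : k + 1 ≤ v 1 := by
              have : m ≤ v 1 := le_trans hmvi hv1i
              omega
            set h := colHeight l v k with hhdef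
            have hjh : j ≤ h := lm_le_colHeight hv h1j hjl hkvj
            have h1h : 1 ≤ h := le_trans h1j hjh
            have hhl : h ≤ l := lm_colHeight_le k
            have hkvh : k ≤ v h := lm_k_le_v_colHeight hv h1h
            have c1 : β j k ≤ β h k := lm_std_chain hv hord.1 h1j hjh hhl hkvh
            have c2 : β h k ≤ β 1 (k + 1) := by
              have := hord.2 h h1h hhl (k + 1) hk1v1 (by simpa using hkvh)
              simpa using this
            have c2' : β h k ≠ β 1 (k + 1) := hjunction k (by omega)
            have c3 : β 1 (k + 1) ≤ β i (k + 1) :=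
              lm_std_chain hv hord.1 le_rfl h1i hil (by omega)
            have c4 : β i (k + 1) ≤ β i m := lm_row_mono hinc_i (by omega) hmvi
            omega
          have : β i m ≤ β i k := lm_row_mono hinc_i hmk hkvi
          omega
    intro k hkvj
    have : k ≤ N + ((k - N).toNat : ℤ) := by
      rcases le_or_gt k N with h | h
      · omega
      · rw [Int.toNat_of_nonneg (by omega)]; omega
    exact key (k - N).toNat k hkvj this
  refine ⟨main, ?_⟩
  intro i j k h1i hij hjk hkl ψki ψji ψkj hki hji hkj x hx
  obtain ⟨m, hm, rfl⟩ := hx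
  have h1j : 1 ≤ j := by omega
  have hjl : j ≤ l := by omega
  have hmvj : m ≤ v j := le_trans hm (lm_v_mono hv h1j (le_of_lt hjk) hkl)
  rw [main i k h1i (by omega) hkl ψki hki m hm,
      main j k h1j (le_of_lt hjk) hkl ψkj hkj m hm,
      main i j h1i (le_of_lt hij) hjl ψji hji m hmvj]
end
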